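/- arXiv:2512.15797 — 12 statements merged into one kernel-verified Lean document; each statement's English description precedes it below -/
import Mathlib

section
/- For every positive integer n and every real x, the normalized remainder of the sine series satisfies the integral representation T_sin n x = (2n+1) ∫₀¹ (1-u)^{2n} cos(x·u) du. -/
/-- The `n`-th normalized remainder of the Maclaurin series of sine:
`T_sin n x = (-1)^n (2n+1)!/x^(2n+1) (sin x - ∑_{k<n} (-1)^k x^(2k+1)/(2k+1)!)` for `x ≠ 0`,
and `1` at `x = 0`. -/
noncomputable def Tsin (n : ℕ) (x : ℝ) : ℝ :=
  if x = 0 then 1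
  else (-1 : ℝ) ^ n * (Nat.factorial (2 * n + 1)) / x ^ (2 * n + 1) *
    (Real.sin x - ∑ k ∈ Finset.range n, (-1 : ℝ) ^ k * x ^ (2 * k + 1) / (Nat.factorial (2 * k + 1)))

/-!
Integrating by parts against `(1 - u) ^ m` gives
`(m + 1) ∫₀¹ (1 - u)^m f(xu) du = f 0 + x ∫₀¹ (1 - u)^(m+1) f'(xu) du`.
Applied to `cos` and then to `sin`, this yields the recursion
`(m+1)(m+2) I_m = (m+2) - x² I_{m+2}` for `I_m = ∫₀¹ (1 - u)^m cos(xu) du`,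
and induction from `x I₀ = sin x` gives Taylor's formula with integral remainder
`sin x - ∑_{k<n} (-1)^k x^(2k+1)/(2k+1)! = (-1)^n x^(2n+1)/(2n)! · I_{2n}`.
Multiplying by `(-1)^n (2n+1)!/x^(2n+1)` gives the claim; at `x = 0` it is `(2n+1) I_{2n} = 1`.
-/

open Real intervalIntegral

theorem mul_integral_one_sub_pow_mul_comp_mul {f f' : ℝ → ℝ}
    (hf : ∀ t, HasDerivAt f (f' t) t) (hf' : Continuous f') (m : ℕ) (x : ℝ) :
    (m + 1) * ∫ u in (0:ℝ)..1, (1 - u) ^ m * f (x * u)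
      = f 0 + x * ∫ u in (0:ℝ)..1, (1 - u) ^ (m + 1) * f' (x * u) := by
  have hfc : Continuous f := continuous_iff_continuousAt.2 fun t => (hf t).continuousAt
  have hu (t : ℝ) : HasDerivAt (fun t => f (x * t)) (x * f' (x * t)) t := by
    simpa [Function.comp_def] using (hf (x * t)).scomp t ((hasDerivAt_id' t).const_mul x)
  have hv (t : ℝ) : HasDerivAt (fun t => -(1 - t) ^ (m + 1)) ((m + 1) * (1 - t) ^ m) t := by
    simpa using (((hasDerivAt_id' t).const_sub 1).fun_pow (m + 1)).fun_neg
  have hparts := integral_mul_deriv_eq_deriv_mul (a := 0) (b := 1)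
    (fun t _ => hu t) (fun t _ => hv t)
    (by apply Continuous.intervalIntegrable; fun_prop)
    (by apply Continuous.intervalIntegrable; fun_prop)
  simp only [sub_self, sub_zero, zero_pow (Nat.succ_ne_zero m), one_pow, neg_zero, mul_zero,
    zero_add, mul_neg, mul_one, integral_neg, sub_neg_eq_add] at hparts
  rw [← integral_const_mul, ← integral_const_mul]
  convert hparts using 2 <;> (congr 1; ext u; ring)

theorem integral_one_sub_pow_mul_cos_mul_recurrence (m : ℕ) (x : ℝ) :
    (m + 1) * (m + 2) * ∫ u in (0:ℝ)..1, (1 - u) ^ m * cos (x * u)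
      = (m + 2) - x ^ 2 * ∫ u in (0:ℝ)..1, (1 - u) ^ (m + 2) * cos (x * u) := by
  have hcos := mul_integral_one_sub_pow_mul_comp_mul (fun t => hasDerivAt_cos t)
    continuous_sin.neg m x
  have hsin := mul_integral_one_sub_pow_mul_comp_mul (fun t => hasDerivAt_sin t)
    continuous_cos (m + 1) x
  simp only [mul_neg, integral_neg, cos_zero, sin_zero, zero_add] at hcos hsin
  push_cast at hsin
  linear_combination (m + 2 : ℝ) * hcos - x * hsin

theorem sin_sub_sum_eq_integral (n : ℕ) (x : ℝ) :
    sin x - ∑ k ∈ Finset.range n, (-1 : ℝ) ^ k * x ^ (2 * k + 1) / (2 * k + 1).factorial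
      = (-1) ^ n * x ^ (2 * n + 1) / (2 * n).factorial
        * ∫ u in (0:ℝ)..1, (1 - u) ^ (2 * n) * cos (x * u) := by
  induction n with
  | zero => simp
  | succ n ih =>
    have hrec := integral_one_sub_pow_mul_cos_mul_recurrence (2 * n) x
    have hfac : ((2 * (n + 1)).factorial : ℝ) = (2 * n + 2) * (2 * n + 1) * (2 * n).factorial := by
      push_cast [show 2 * (n + 1) = 2 * n + 1 + 1 by ring, Nat.factorial_succ]; ring
    rw [Finset.sum_range_succ, ← sub_sub, ih, hfac, Nat.factorial_succ]
    push_cast at hrec ⊢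
    generalize (∫ u in (0:ℝ)..1, (1 - u) ^ (2 * n) * cos (x * u)) = I at hrec ⊢
    generalize (∫ u in (0:ℝ)..1, (1 - u) ^ (2 * n + 2) * cos (x * u)) = J at hrec ⊢
    field_simp
    linear_combination (-1) ^ n * x ^ (2 * n + 1) * hrec

theorem Tsin_integral_repr_general (n : ℕ) (x : ℝ) :
    Tsin n x = (2 * n + 1 : ℝ) * ∫ u in (0:ℝ)..1, (1 - u) ^ (2 * n) * Real.cos (x * u) := by
  rcases eq_or_ne x 0 with rfl | hx
  · simpa [Tsin] using
      (mul_integral_one_sub_pow_mul_comp_mul (fun t => hasDerivAt_cos t) continuous_sin.neg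
        (2 * n) 0).symm
  · rw [Tsin, if_neg hx, sin_sub_sum_eq_integral, Nat.factorial_succ]
    push_cast
    generalize (∫ u in (0:ℝ)..1, (1 - u) ^ (2 * n) * cos (x * u)) = I
    field_simp
    rw [← pow_mul, Even.neg_one_pow ⟨n, by ring⟩, one_mul]

theorem Tsin_integral_repr (n : ℕ) (hn : 0 < n) (x : ℝ) :
    Tsin n x = (2 * n + 1 : ℝ) * ∫ u in (0:ℝ)..1, (1 - u) ^ (2 * n) * Real.cos (x * u) :=
  Tsin_integral_repr_general n x
end

section
/- For every positive integer n and every real x, the normalized remainder of the cosine series satisfies the integral representation T_cos (2n) x = 2n ∫₀¹ (1-u)^{2n-1} cos(x·u) du. -/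
/-!
Taylor's theorem with integral remainder, for `cos` at `0` to order `2n - 1`, rescaled to `[0, 1]`
by `t = x u`: the odd derivatives of `cos` vanish at `0` and the `2n`-th one is `(-1)^n cos`, so
the remainder is `(-1)^n x^(2n) / (2n-1)! * ∫₀¹ (1-u)^(2n-1) cos (x u) du`, and the normalization
`(-1)^n (2n)! / x^(2n)` turns it into `2n` times the integral. At `x = 0` both sides are `1`.
-/

/-- The normalized remainder of the Maclaurin series of cosine:
`Tcos m x = (-1)^m (2m)!/x^(2m) (cos x - ∑_{k<m} (-1)^k x^(2k)/(2k)!)` for `x ≠ 0`,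
and `1` at `x = 0`.  This is `T_cos (2m)` in the natural-language statement. -/
noncomputable def Tcos (m : ℕ) (x : ℝ) : ℝ :=
  if x = 0 then 1
  else (-1 : ℝ) ^ m * (Nat.factorial (2 * m)) / x ^ (2 * m) *
    (Real.cos x - ∑ k ∈ Finset.range m, (-1 : ℝ) ^ k * x ^ (2 * k) / (Nat.factorial (2 * k)))

open Real Set intervalIntegral
open scoped Nat Interval

section Taylor

variable {F : Type*} [NormedAddCommGroup F] [NormedSpace ℝ F] [CompleteSpace F]

theorem taylor_integral_remainder_of_contDiff {f : ℝ → F} {n : ℕ} (hf : ContDiff ℝ (n + 1) f)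
    (x₀ x : ℝ) :
    f x - ∑ k ∈ Finset.range (n + 1), ((k ! : ℝ)⁻¹ * (x - x₀) ^ k) • iteratedDeriv k f x₀ =
      ∫ t in x₀..x, ((x - t) ^ n / n !) • iteratedDeriv (n + 1) f t := by
  rcases eq_or_ne x₀ x with rfl | hne
  · simp [Finset.sum_range_succ']
  have hs : UniqueDiffOn ℝ [[x₀, x]] := uniqueDiffOn_uIcc hne
  have hder : ∀ k ≤ n + 1, ∀ t ∈ [[x₀, x]],
      iteratedDerivWithin k f [[x₀, x]] t = iteratedDeriv k f t := fun k hk t ht =>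
    iteratedDerivWithin_eq_iteratedDeriv hs ((hf.of_le (by exact_mod_cast hk)).contDiffAt) ht
  have h := taylor_integral_remainder (hf.contDiffOn (s := [[x₀, x]]))
  rw [taylor_within_apply, integral_congr fun t ht => by rw [hder _ le_rfl t ht] ] at h
  rw [← h]
  refine congrArg _ (Finset.sum_congr rfl fun k hk => ?_)
  rw [hder k (by grind) x₀ left_mem_uIcc]

theorem taylor_integral_remainder_unitInterval {f : ℝ → F} {n : ℕ} (hf : ContDiff ℝ (n + 1) f)
    (x : ℝ) :
    f x - ∑ k ∈ Finset.range (n + 1), ((k ! : ℝ)⁻¹ * x ^ k) • iteratedDeriv k f 0 =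
      (x ^ (n + 1) / n !) • ∫ u in (0:ℝ)..1, (1 - u) ^ n • iteratedDeriv (n + 1) f (x * u) := by
  have hsub := smul_integral_comp_mul_left
    (fun t => ((x - t) ^ n / n !) • iteratedDeriv (n + 1) f t) x (a := 0) (b := 1)
  rw [mul_zero, mul_one] at hsub
  have h := taylor_integral_remainder_of_contDiff hf 0 x
  rw [sub_zero] at h
  rw [h, ← hsub, ← integral_smul, ← integral_smul]
  congr 1 with u
  rw [smul_smul, smul_smul, ← mul_one_sub, mul_pow]
  congr 1
  ring

end Taylor

theorem Finset.sum_range_two_mul {M : Type*} [AddCommMonoid M] (f : ℕ → M) (n : ℕ) :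
    ∑ k ∈ Finset.range (2 * n), f k = ∑ k ∈ Finset.range n, (f (2 * k) + f (2 * k + 1)) := by
  induction n with
  | zero => simp
  | succ n ih =>
    rw [Nat.mul_succ, Finset.sum_range_succ, Finset.sum_range_succ, Finset.sum_range_succ, ih,
      add_assoc]

theorem cos_sub_taylor_eq_integral (m : ℕ) (x : ℝ) :
    cos x - ∑ k ∈ Finset.range (m + 1), (-1) ^ k * x ^ (2 * k) / (2 * k)! =
      (-1) ^ (m + 1) * x ^ (2 * m + 2) / (2 * m + 1)! *
        ∫ u in (0:ℝ)..1, (1 - u) ^ (2 * m + 1) * cos (x * u) := by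
  have h := taylor_integral_remainder_unitInterval (n := 2 * m + 1) contDiff_cos x
  rw [show 2 * m + 1 + 1 = 2 * (m + 1) by ring, Finset.sum_range_two_mul] at h
  simp only [iteratedDeriv_even_cos, iteratedDeriv_odd_cos, Pi.mul_apply, Pi.pow_apply,
    Pi.neg_apply, Pi.one_apply, cos_zero, sin_zero, mul_zero, mul_one, add_zero, smul_eq_mul,
    mul_left_comm _ ((-1 : ℝ) ^ (m + 1)), integral_const_mul] at h
  convert h using 1
  · exact congrArg _ (Finset.sum_congr rfl fun k _ => by ring)
  · ring

theorem integral_one_sub_pow (k : ℕ) : ∫ u in (0:ℝ)..1, (1 - u) ^ k = 1 / (k + 1) := by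
  simp [integral_comp_sub_left fun u : ℝ => u ^ k]

theorem Tcos_integral_repr (n : ℕ) (hn : 0 < n) (x : ℝ) :
    Tcos n x = (2 * n : ℝ) * ∫ u in (0:ℝ)..1, (1 - u) ^ (2 * n - 1) * Real.cos (x * u) := by
  obtain ⟨m, rfl⟩ := Nat.exists_eq_add_one_of_ne_zero hn.ne'
  rw [show 2 * (m + 1) - 1 = 2 * m + 1 by omega]
  rcases eq_or_ne x 0 with rfl | hx
  · simp only [Tcos, if_true, zero_mul, cos_zero, mul_one, integral_one_sub_pow]
    push_cast
    field_simp
    ring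
  · have hfact : ((2 * (m + 1))! : ℝ) = (2 * m + 2) * (2 * m + 1)! := by
      rw [show 2 * (m + 1) = 2 * m + 1 + 1 by ring, Nat.factorial_succ]
      push_cast
      ring
    rw [Tcos, if_neg hx, cos_sub_taylor_eq_integral, hfact]
    generalize ∫ u in (0:ℝ)..1, (1 - u) ^ (2 * m + 1) * cos (x * u) = I
    have hsign : ((-1 : ℝ) ^ (m + 1)) ^ 2 = 1 := by rw [← pow_mul, pow_mul', neg_one_sq, one_pow]
    push_cast
    field_simp
    linear_combination x ^ (2 * m + 2) * I * hsign
end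

section
/- For every positive integer n, the function x ↦ T_sin n x is positive and strictly decreasing on the interval (0, ∞), and it is concave on the interval (0, π). -/
/-!
Write `T_n = (2n+1)! P_n / x^(2n+1)` with `P_n = (-1)^n (sin x - ∑_{k<n} (-1)^k x^(2k+1)/(2k+1)!)`.
For the Euler operator `E_N g = x g' - N g` one has `(g / x^N)' = E_N g / x^(N+1)`, so the signs of
`T_n'` and `T_n''` are those of `E_{2n+1} P_n` and `E_{2n+2} E_{2n+1} P_n`.
Since `P_{n+1}'' = P_n` and `(E_N g)'' = E_{N-2} g''`, in each of the three sequences `P_n`,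
`E_{2n+1} P_n`, `E_{2n+2} E_{2n+1} P_n` every term is a second antiderivative of the previous one,
vanishing to second order at `0`; so a sign on `(0, b)` propagates from `n = 1` to all `n`.
For `n = 1` the three signs are `sin x < x`, the Cusa–Huygens inequality `3 sin x < x (2 + cos x)`,
and `6x (1 + cos x) < (12 - x²) sin x` on `(0, π)`, which the substitution `x = 2t` reduces to
`3t cos t < (3 - t²) sin t` on `(0, π/2)`, i.e. to the monotonicity of `(3 - t²) sin t - 3t cos t`.
-/

open Set Real
open scoped ContDiff

lemma pos_of_hasDerivAt_pos {f f' : ℝ → ℝ} {b : ℝ} (hf : ∀ x, HasDerivAt f (f' x) x)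
    (h0 : f 0 = 0) (hf' : ∀ x ∈ Ioo 0 b, 0 < f' x) : ∀ x ∈ Ioo 0 b, 0 < f x := by
  intro x hx
  have hmono : StrictMonoOn f (Icc 0 x) := by
    refine strictMonoOn_of_deriv_pos (convex_Icc 0 x)
      (fun y _ => (hf y).continuousAt.continuousWithinAt) fun y hy => ?_
    rw [interior_Icc] at hy
    rw [(hf y).deriv]
    exact hf' y ⟨hy.1, hy.2.trans hx.2⟩
  simpa [h0] using hmono (left_mem_Icc.2 hx.1.le) (right_mem_Icc.2 hx.1.le) hx.1

lemma pos_of_hasDerivAt_hasDerivAt_pos {f f' f'' : ℝ → ℝ} {b : ℝ}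
    (hf : ∀ x, HasDerivAt f (f' x) x) (hf' : ∀ x, HasDerivAt f' (f'' x) x)
    (h0 : f 0 = 0) (h0' : f' 0 = 0) (hf'' : ∀ x ∈ Ioo 0 b, 0 < f'' x) :
    ∀ x ∈ Ioo 0 b, 0 < f x :=
  pos_of_hasDerivAt_pos hf h0 (pos_of_hasDerivAt_pos hf' h0' hf'')

noncomputable def eulerOp (N : ℝ) (g : ℝ → ℝ) (x : ℝ) : ℝ :=
  x * deriv g x - N * g x

section eulerOp

variable {g : ℝ → ℝ}

lemma ContDiff.eulerOp (hg : ContDiff ℝ ∞ g) (N : ℝ) : ContDiff ℝ ∞ (eulerOp N g) :=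
  (contDiff_id.mul (contDiff_infty_iff_deriv.1 hg).2).sub (contDiff_const.mul hg)

lemma deriv_eulerOp (hg : ContDiff ℝ 2 g) (N : ℝ) :
    deriv (eulerOp N g) = eulerOp (N - 1) (deriv g) := by
  funext x
  have hg' := (hg.differentiable (by norm_num) x).hasDerivAt
  have hg'' := (hg.differentiable_deriv_two x).hasDerivAt
  refine (((hasDerivAt_id x).mul hg'').sub (hg'.const_mul N)).deriv.trans ?_
  simp only [eulerOp, id]
  ring

lemma eulerOp_const_mul (N c : ℝ) :
    eulerOp N (fun x => c * g x) = fun x => c * eulerOp N g x := by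
  funext x
  simp only [eulerOp, deriv_const_mul_field']
  ring

lemma hasDerivAt_div_pow {x : ℝ} (hg : DifferentiableAt ℝ g x) (hx : x ≠ 0) (N : ℕ) :
    HasDerivAt (fun y => g y / y ^ N) (eulerOp N g x / x ^ (N + 1)) x := by
  refine (hg.hasDerivAt.div (hasDerivAt_pow N x) (pow_ne_zero N hx)).congr_deriv ?_
  rcases N with _ | N
  · simp only [eulerOp, CharP.cast_eq_zero, zero_mul, sub_zero, zero_add, pow_zero, pow_one,
      mul_one, one_pow, div_one, mul_zero]
    field_simp
  · simp only [eulerOp, Nat.add_sub_cancel]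
    field_simp
    push_cast
    ring

lemma strictAntiOn_div_pow (hg : Differentiable ℝ g) {N : ℕ}
    (hneg : ∀ x ∈ Ioi 0, eulerOp N g x < 0) : StrictAntiOn (fun x => g x / x ^ N) (Ioi 0) := by
  have hd : ∀ x ∈ Ioi (0 : ℝ), HasDerivAt (fun y => g y / y ^ N) (eulerOp N g x / x ^ (N + 1)) x :=
    fun x hx => hasDerivAt_div_pow (hg x) (ne_of_gt hx) N
  refine strictAntiOn_of_deriv_neg (convex_Ioi 0)
    (fun x hx => (hd x hx).continuousAt.continuousWithinAt) fun x hx => ?_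
  rw [interior_Ioi] at hx
  rw [(hd x hx).deriv]
  exact div_neg_of_neg_of_pos (hneg x hx) (pow_pos hx _)

lemma concaveOn_div_pow (hg : ContDiff ℝ 2 g) {N : ℕ} {a b : ℝ} (ha : 0 ≤ a)
    (hnonpos : ∀ x ∈ Ioo a b, eulerOp (N + 1 : ℕ) (eulerOp N g) x ≤ 0) :
    ConcaveOn ℝ (Ioo a b) (fun x => g x / x ^ N) := by
  have hg' : Differentiable ℝ (eulerOp N g) :=
    (differentiable_id.mul hg.differentiable_deriv_two).sub
      ((hg.differentiable (by norm_num)).const_mul _)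
  have hd : ∀ x ∈ Ioo a b, HasDerivAt (fun y => g y / y ^ N) (eulerOp N g x / x ^ (N + 1)) x :=
    fun x hx => hasDerivAt_div_pow (hg.differentiable (by norm_num) x) (ha.trans_lt hx.1).ne' N
  have hd' : ∀ x ∈ Ioo a b, HasDerivAt (fun y => eulerOp N g y / y ^ (N + 1))
      (eulerOp (N + 1 : ℕ) (eulerOp N g) x / x ^ (N + 1 + 1)) x :=
    fun x hx => hasDerivAt_div_pow (hg' x) (ha.trans_lt hx.1).ne' (N + 1)
  refine concaveOn_of_hasDerivWithinAt2_nonpos (convex_Ioo a b)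
    (f' := fun x => eulerOp N g x / x ^ (N + 1))
    (f'' := fun x => eulerOp (N + 1 : ℕ) (eulerOp N g) x / x ^ (N + 1 + 1))
    (fun x hx => (hd x hx).continuousAt.continuousWithinAt) ?_ ?_ ?_ <;> rw [interior_Ioo]
  · exact fun x hx => (hd x hx).hasDerivWithinAt
  · exact fun x hx => (hd' x hx).hasDerivWithinAt
  · exact fun x hx =>
      div_nonpos_of_nonpos_of_nonneg (hnonpos x hx) (pow_pos (ha.trans_lt hx.1) _).le

end eulerOp

structure IsSecondAntiderivChain (u : ℕ → ℝ → ℝ) : Prop where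
  contDiff : ∀ n, ContDiff ℝ ∞ (u n)
  apply_succ_zero : ∀ n, u (n + 1) 0 = 0
  deriv_succ_zero : ∀ n, deriv (u (n + 1)) 0 = 0
  deriv_deriv_succ : ∀ n, deriv (deriv (u (n + 1))) = u n

namespace IsSecondAntiderivChain

variable {u : ℕ → ℝ → ℝ}

lemma neg (hu : IsSecondAntiderivChain u) : IsSecondAntiderivChain fun n x => -u n x where
  contDiff n := (hu.contDiff n).neg
  apply_succ_zero n := by simp [hu.apply_succ_zero n]
  deriv_succ_zero n := by simp [hu.deriv_succ_zero n]
  deriv_deriv_succ n := by simp [hu.deriv_deriv_succ n]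

lemma eulerOp (hu : IsSecondAntiderivChain u) (N : ℝ) :
    IsSecondAntiderivChain fun n => eulerOp (N + 2 * n) (u n) where
  contDiff n := (hu.contDiff n).eulerOp _
  apply_succ_zero n := by simp [_root_.eulerOp, hu.apply_succ_zero n]
  deriv_succ_zero n := by
    rw [deriv_eulerOp ((hu.contDiff _).of_le (by norm_cast))]
    simp [_root_.eulerOp, hu.deriv_succ_zero n]
  deriv_deriv_succ n := by
    have hu' := contDiff_infty_iff_deriv.1 (hu.contDiff (n + 1))
    rw [deriv_eulerOp ((hu.contDiff _).of_le (by norm_cast)),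
      deriv_eulerOp (hu'.2.of_le (by norm_cast)), hu.deriv_deriv_succ n]
    congr 1
    push_cast
    ring

lemma pos (hu : IsSecondAntiderivChain u) {b : ℝ} (h0 : ∀ x ∈ Ioo 0 b, 0 < u 0 x) (n : ℕ) :
    ∀ x ∈ Ioo 0 b, 0 < u n x := by
  induction n with
  | zero => exact h0
  | succ n ih =>
    have hu' := contDiff_infty_iff_deriv.1 (hu.contDiff (n + 1))
    refine pos_of_hasDerivAt_hasDerivAt_pos (fun x => (hu'.1 x).hasDerivAt) (fun x => ?_)
      (hu.apply_succ_zero n) (hu.deriv_succ_zero n) ih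
    rw [← hu.deriv_deriv_succ n]
    exact (hu'.2.differentiable (by simp) x).hasDerivAt

lemma pos_Ioi (hu : IsSecondAntiderivChain u) (h0 : ∀ x ∈ Ioi 0, 0 < u 0 x) (n : ℕ) :
    ∀ x ∈ Ioi 0, 0 < u n x :=
  fun x hx => hu.pos (b := x + 1) (fun y hy => h0 y hy.1) n x ⟨hx, by linarith⟩

end IsSecondAntiderivChain

noncomputable def sinRem (n : ℕ) (x : ℝ) : ℝ :=
  (-1) ^ n *
    (sin x - ∑ k ∈ Finset.range n, (-1) ^ k * x ^ (2 * k + 1) / (Nat.factorial (2 * k + 1)))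

noncomputable def cosRem (n : ℕ) (x : ℝ) : ℝ :=
  (-1) ^ n * (cos x - ∑ k ∈ Finset.range n, (-1) ^ k * x ^ (2 * k) / (Nat.factorial (2 * k)))

lemma contDiff_sinRem (n : ℕ) : ContDiff ℝ ∞ (sinRem n) := by
  unfold sinRem; fun_prop

@[simp] lemma sinRem_apply_zero (n : ℕ) : sinRem n 0 = 0 := by
  simp [sinRem]

@[simp] lemma cosRem_succ_apply_zero (n : ℕ) : cosRem (n + 1) 0 = 0 := by
  simp [cosRem, Finset.sum_range_succ']

lemma sinRem_zero : sinRem 0 = sin := by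
  funext x; simp [sinRem]

lemma sinRem_one : sinRem 1 = fun x => x - sin x := by
  funext x; simp [sinRem]

lemma cosRem_one : cosRem 1 = fun x => 1 - cos x := by
  funext x; simp [cosRem]

lemma hasDerivAt_mul_pow_succ_div_factorial (c : ℝ) (m : ℕ) (x : ℝ) :
    HasDerivAt (fun y : ℝ => c * y ^ (m + 1) / (m + 1).factorial) (c * x ^ m / m.factorial) x := by
  refine (((hasDerivAt_pow (m + 1) x).const_mul c).div_const _).congr_deriv ?_
  rw [Nat.factorial_succ]
  push_cast
  field_simp

lemma deriv_sinRem (n : ℕ) : deriv (sinRem n) = cosRem n := by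
  funext x
  exact HasDerivAt.deriv (((hasDerivAt_sin x).sub (HasDerivAt.fun_sum fun k _ =>
    hasDerivAt_mul_pow_succ_div_factorial _ (2 * k) x)).const_mul _)

lemma deriv_cosRem_succ (n : ℕ) : deriv (cosRem (n + 1)) = sinRem n := by
  have hshift : cosRem (n + 1) = fun y => (-1) ^ (n + 1) * (cos y - 1 -
      ∑ k ∈ Finset.range n, (-1) ^ (k + 1) * y ^ (2 * k + 1 + 1) / (2 * k + 1 + 1).factorial) := by
    funext y
    simp only [cosRem, Finset.sum_range_succ']
    ring_nf
  funext x
  rw [hshift]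
  refine HasDerivAt.deriv (((((hasDerivAt_cos x).sub_const 1).sub (HasDerivAt.fun_sum fun k _ =>
    hasDerivAt_mul_pow_succ_div_factorial _ (2 * k + 1) x)).const_mul _).congr_deriv ?_)
  simp only [sinRem, pow_succ, mul_neg, neg_mul, mul_one, neg_div, Finset.sum_neg_distrib]
  ring

lemma Tsin_eq {n : ℕ} {x : ℝ} (hx : x ≠ 0) :
    Tsin n x = (2 * n + 1).factorial * sinRem n x / x ^ (2 * n + 1) := by
  rw [Tsin, if_neg hx, sinRem]
  ring

lemma isSecondAntiderivChain_sinRem : IsSecondAntiderivChain fun n => sinRem (n + 1) where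
  contDiff n := contDiff_sinRem _
  apply_succ_zero n := sinRem_apply_zero _
  deriv_succ_zero n := by rw [deriv_sinRem]; exact cosRem_succ_apply_zero _
  deriv_deriv_succ n := by rw [deriv_sinRem, deriv_cosRem_succ]

lemma mul_cos_lt_sin {x : ℝ} (hx : x ∈ Ioo 0 π) : x * cos x < sin x := by
  have hd : ∀ t, HasDerivAt (fun t => sin t - t * cos t) (t * sin t) t := fun t =>
    ((hasDerivAt_sin t).sub ((hasDerivAt_id t).mul (hasDerivAt_cos t))).congr_deriv (by simp)
  have := pos_of_hasDerivAt_pos hd (by simp)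
    (fun t ht => mul_pos ht.1 (sin_pos_of_pos_of_lt_pi ht.1 ht.2)) x hx
  linarith

/-- The Cusa–Huygens inequality. -/
lemma three_mul_sin_lt_mul_two_add_cos {x : ℝ} (hx : 0 < x) : 3 * sin x < x * (2 + cos x) := by
  rcases lt_or_ge x π with hxπ | hπx
  · have hd : ∀ t, HasDerivAt (fun t => t * (2 + cos t) - 3 * sin t)
        (2 - 2 * cos t - t * sin t) t := fun t =>
      (((hasDerivAt_id t).mul ((hasDerivAt_cos t).const_add 2)).sub
        ((hasDerivAt_sin t).const_mul 3)).congr_deriv (by simp only [id_eq, one_mul, mul_neg]; ring)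
    have hd' : ∀ t, HasDerivAt (fun t => 2 - 2 * cos t - t * sin t) (sin t - t * cos t) t :=
      fun t => ((((hasDerivAt_cos t).const_mul 2).const_sub 2).sub
        ((hasDerivAt_id t).mul (hasDerivAt_sin t))).congr_deriv
          (by simp only [id_eq, one_mul, mul_neg, neg_neg]; ring)
    have := pos_of_hasDerivAt_hasDerivAt_pos hd hd' (by simp) (by simp)
      (fun t ht => sub_pos.2 (mul_cos_lt_sin ht)) x ⟨hx, hxπ⟩
    linarith
  · nlinarith [pi_gt_three, sin_le_one x, neg_one_le_cos x]

lemma three_mul_mul_cos_lt {t : ℝ} (ht : t ∈ Ioo 0 (π / 2)) :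
    3 * t * cos t < (3 - t ^ 2) * sin t := by
  have hd : ∀ s, HasDerivAt (fun s => (3 - s ^ 2) * sin s - 3 * s * cos s)
      (s * (sin s - s * cos s)) s := fun s =>
    ((((hasDerivAt_pow 2 s).const_sub 3).mul (hasDerivAt_sin s)).sub
      (((hasDerivAt_id s).const_mul 3).mul (hasDerivAt_cos s))).congr_deriv
        (by simp only [id_eq, mul_one, mul_neg, Nat.cast_ofNat, Nat.add_one_sub_one, pow_one]; ring)
  have := pos_of_hasDerivAt_pos hd (by simp)
    (fun s hs => mul_pos hs.1 (sub_pos.2 (mul_cos_lt_sin ⟨hs.1, by linarith [hs.2, pi_pos]⟩)))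
    t ht
  linarith

lemma six_mul_mul_one_add_cos_lt {x : ℝ} (hx : x ∈ Ioo 0 π) :
    6 * x * (1 + cos x) < (12 - x ^ 2) * sin x := by
  have hsin : sin x = 2 * sin (x / 2) * cos (x / 2) := by
    rw [← sin_two_mul, mul_div_cancel₀ x two_ne_zero]
  have hcos : 1 + cos x = 2 * cos (x / 2) ^ 2 := by
    rw [cos_sq, mul_div_cancel₀ x two_ne_zero]
    ring
  have hc : 0 < cos (x / 2) := cos_pos_of_mem_Ioo ⟨by linarith [pi_pos, hx.1], by linarith [hx.2]⟩
  have h := three_mul_mul_cos_lt (t := x / 2) ⟨by linarith [hx.1], by linarith [hx.2]⟩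
  rw [hsin, hcos]
  nlinarith [mul_lt_mul_of_pos_left h (by positivity : (0 : ℝ) < 8 * cos (x / 2))]

lemma eulerOp_three_sinRem_one (x : ℝ) : eulerOp 3 (sinRem 1) x = 3 * sin x - x * (2 + cos x) := by
  rw [eulerOp, deriv_sinRem, sinRem_one, cosRem_one]
  ring

lemma eulerOp_four_eulerOp_three_sinRem_one (x : ℝ) :
    eulerOp 4 (eulerOp 3 (sinRem 1)) x = 6 * x * (1 + cos x) - (12 - x ^ 2) * sin x := by
  have h : deriv (eulerOp 3 (sinRem 1)) x = x * sin x - 2 * (1 - cos x) := by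
    rw [deriv_eulerOp ((contDiff_sinRem 1).of_le (by norm_cast)), eulerOp, deriv_sinRem,
      show deriv (cosRem 1) = sinRem 0 from deriv_cosRem_succ 0, sinRem_zero, cosRem_one]
    ring
  rw [eulerOp, h, eulerOp_three_sinRem_one]
  ring

lemma sinRem_succ_pos (n : ℕ) {x : ℝ} (hx : 0 < x) : 0 < sinRem (n + 1) x :=
  isSecondAntiderivChain_sinRem.pos_Ioi (fun y hy => by simpa [sinRem_one] using sin_lt hy) n x hx

lemma eulerOp_sinRem_succ_neg (n : ℕ) {x : ℝ} (hx : 0 < x) :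
    eulerOp (3 + 2 * n) (sinRem (n + 1)) x < 0 :=
  neg_pos.1 <| (isSecondAntiderivChain_sinRem.eulerOp 3).neg.pos_Ioi
    (fun y hy => by simpa [eulerOp_three_sinRem_one] using three_mul_sin_lt_mul_two_add_cos hy)
    n x hx

lemma eulerOp_eulerOp_sinRem_succ_neg (n : ℕ) {x : ℝ} (hx : x ∈ Ioo 0 π) :
    eulerOp (4 + 2 * n) (eulerOp (3 + 2 * n) (sinRem (n + 1))) x < 0 :=
  neg_pos.1 <| ((isSecondAntiderivChain_sinRem.eulerOp 3).eulerOp 4).neg.pos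
    (fun y hy => by
      simpa [eulerOp_four_eulerOp_three_sinRem_one] using six_mul_mul_one_add_cos_lt hy)
    n x hx

theorem Tsin_pos_strictAnti_concave (n : ℕ) (hn : 0 < n) :
    (∀ x ∈ Set.Ioi (0:ℝ), 0 < Tsin n x) ∧
    StrictAntiOn (Tsin n) (Set.Ioi (0:ℝ)) ∧
    ConcaveOn ℝ (Set.Ioo 0 Real.pi) (Tsin n) := by
  obtain ⟨m, rfl⟩ : ∃ m, n = m + 1 := ⟨n - 1, by omega⟩
  set N := 2 * (m + 1) + 1 with hN
  have hN0 : (N : ℝ) = 3 + 2 * m := by rw [hN]; push_cast; ring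
  have hN1 : ((N + 1 : ℕ) : ℝ) = 4 + 2 * m := by push_cast; rw [hN0]; ring
  have hc : (0 : ℝ) < N.factorial := by positivity
  have hT : EqOn (fun x => N.factorial * sinRem (m + 1) x / x ^ N) (Tsin (m + 1)) (Ioi 0) :=
    fun x hx => (Tsin_eq (ne_of_gt hx)).symm
  have hsmooth : ContDiff ℝ ∞ fun x => (N.factorial : ℝ) * sinRem (m + 1) x :=
    contDiff_const.mul (contDiff_sinRem _)
  refine ⟨fun x hx => ?_, ?_, ?_⟩
  · rw [← hT hx]
    exact div_pos (mul_pos hc (sinRem_succ_pos m hx)) (pow_pos hx _)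
  · refine (strictAntiOn_div_pow (hsmooth.differentiable (by norm_cast)) fun x hx => ?_).congr hT
    rw [eulerOp_const_mul, hN0]
    exact mul_neg_of_pos_of_neg hc (eulerOp_sinRem_succ_neg m hx)
  · refine (concaveOn_div_pow (hsmooth.of_le (by norm_cast)) le_rfl fun x hx => ?_).congr
      (hT.mono Ioo_subset_Ioi_self)
    rw [eulerOp_const_mul, eulerOp_const_mul, hN1, hN0]
    exact mul_nonpos_of_nonneg_of_nonpos hc.le (eulerOp_eulerOp_sinRem_succ_neg m hx).le
end

section
/- For every positive integer n, the ratio T_sin n x / T_sin (n+1) x tends to n(2n+1)/((n+1)(2n+3)) as x → ∞, and tends to 1 as x → 0. -/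
open Filter Topology Real Finset Nat

theorem hasSum_sin_sub_sum_range (m : ℕ) (x : ℝ) :
    HasSum (fun j => (-1 : ℝ) ^ (j + m) * x ^ (2 * (j + m) + 1) / (2 * (j + m) + 1)!)
      (sin x - ∑ k ∈ range m, (-1 : ℝ) ^ k * x ^ (2 * k + 1) / (2 * k + 1)!) :=
  (hasSum_nat_add_iff' m).mpr (Real.hasSum_sin x)

theorem abs_sin_sub_sum_range_le (m : ℕ) (x : ℝ) :
    |sin x - ∑ k ∈ range m, (-1 : ℝ) ^ k * x ^ (2 * k + 1) / (2 * k + 1)!| ≤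
      |x| ^ (2 * m + 1) * cosh x := by
  rw [← cosh_abs]
  refine (hasSum_sin_sub_sum_range m x).norm_le_of_bounded
    ((Real.hasSum_cosh |x|).mul_left (|x| ^ (2 * m + 1))) fun j => ?_
  have hfac : ((2 * j)! : ℝ) ≤ (2 * (j + m) + 1)! := by gcongr; omega
  rw [norm_div, norm_mul, norm_pow, norm_pow, norm_neg, norm_one, one_pow, one_mul,
    Real.norm_natCast, Real.norm_eq_abs, mul_div_assoc', ← pow_add,
    show 2 * m + 1 + 2 * j = 2 * (j + m) + 1 by ring]
  gcongr

theorem abs_tsin_le (m : ℕ) (x : ℝ) : |Tsin m x| ≤ (2 * m + 1)! * cosh x := by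
  rcases eq_or_ne x 0 with rfl | hx
  · simp [Tsin, Nat.one_le_iff_ne_zero, factorial_ne_zero]
  rw [Tsin, if_neg hx, abs_mul, abs_div, abs_mul, abs_pow, abs_neg, abs_one, one_pow, one_mul,
    Nat.abs_cast, abs_pow, div_mul_eq_mul_div, div_le_iff₀ (by positivity), mul_assoc]
  gcongr
  rw [mul_comm]
  exact abs_sin_sub_sum_range_le m x

theorem sq_mul_tsin_succ (n : ℕ) (x : ℝ) :
    x ^ 2 * Tsin (n + 1) x = (2 * n + 2) * (2 * n + 3) * (1 - Tsin n x) := by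
  rcases eq_or_ne x 0 with rfl | hx
  · simp [Tsin]
  simp only [Tsin, hx, if_false, sum_range_succ, pow_succ (-1 : ℝ) n,
    show 2 * (n + 1) + 1 = 2 * n + 1 + 1 + 1 by ring, factorial_succ]
  push_cast
  rcases neg_one_pow_eq_or ℝ n with h | h <;> rw [h] <;> field_simp <;> ring

theorem tsin_zero_eq_sinc : Tsin 0 = sinc := by
  ext x
  rcases eq_or_ne x 0 with rfl | hx
  · simp [Tsin]
  simp [Tsin, sinc_of_ne_zero hx, hx, div_eq_inv_mul]

theorem tendsto_sinc_atTop : Tendsto sinc atTop (𝓝 0) := by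
  refine squeeze_zero_norm' ?_ tendsto_inv_atTop_zero
  filter_upwards [eventually_gt_atTop 0] with x hx
  rw [sinc_of_ne_zero hx.ne', norm_div, Real.norm_of_nonneg hx.le, div_le_iff₀ hx,
    inv_mul_cancel₀ hx.ne']
  exact abs_sin_le_one x

theorem tendsto_tsin_atTop (n : ℕ) : Tendsto (Tsin n) atTop (𝓝 0) := by
  induction n with
  | zero => simpa [tsin_zero_eq_sinc] using tendsto_sinc_atTop
  | succ n ih =>
    have hlim := ((tendsto_const_nhds (x := (1 : ℝ))).sub ih |>.const_mul
      ((2 * n + 2) * (2 * n + 3) : ℝ)).div_atTop (tendsto_pow_atTop two_ne_zero)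
    refine hlim.congr' ?_
    filter_upwards [eventually_ne_atTop 0] with x hx
    rw [← sq_mul_tsin_succ, mul_div_cancel_left₀ _ (pow_ne_zero 2 hx)]

theorem tendsto_sq_mul_tsin_succ_atTop (n : ℕ) :
    Tendsto (fun x => x ^ 2 * Tsin (n + 1) x) atTop (𝓝 ((2 * n + 2) * (2 * n + 3))) := by
  have hlim := (tendsto_const_nhds (x := (1 : ℝ))).sub (tendsto_tsin_atTop n) |>.const_mul
    ((2 * n + 2) * (2 * n + 3) : ℝ)
  rw [sub_zero, mul_one] at hlim
  simpa only [sq_mul_tsin_succ] using hlim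

theorem tendsto_tsin_nhds_zero (n : ℕ) : Tendsto (Tsin n) (𝓝 0) (𝓝 1) := by
  have hbound : Tendsto (fun x : ℝ => (2 * n + 3)! * (x ^ 2 * cosh x)) (𝓝 0) (𝓝 0) := by
    simpa using ((continuous_pow 2).mul continuous_cosh).tendsto 0 |>.const_mul _
  have hsmall : Tendsto (fun x => x ^ 2 * Tsin (n + 1) x) (𝓝 0) (𝓝 0) := by
    refine squeeze_zero_norm (fun x => ?_) hbound
    rw [norm_mul, norm_pow, Real.norm_eq_abs, Real.norm_eq_abs, sq_abs, mul_left_comm]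
    gcongr
    exact abs_tsin_le (n + 1) x
  have hlim := (tendsto_const_nhds (x := (1 : ℝ))).sub
    (hsmall.div_const ((2 * n + 2) * (2 * n + 3)))
  rw [zero_div, sub_zero] at hlim
  refine hlim.congr fun x => ?_
  rw [sq_mul_tsin_succ]
  field_simp
  ring

theorem Tsin_ratio_limits (n : ℕ) (hn : 0 < n) :
    Filter.Tendsto (fun x => Tsin n x / Tsin (n + 1) x) Filter.atTop
      (nhds (((n : ℝ) * (2 * n + 1)) / ((n + 1) * (2 * n + 3)))) ∧
    Filter.Tendsto (fun x => Tsin n x / Tsin (n + 1) x) (nhdsWithin 0 {(0:ℝ)}ᶜ) (nhds 1) := by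
  refine ⟨?_, ?_⟩
  · obtain ⟨m, rfl⟩ := exists_add_one_eq.mpr hn
    have hlim := (tendsto_sq_mul_tsin_succ_atTop m).div (tendsto_sq_mul_tsin_succ_atTop (m + 1))
      (by positivity)
    convert hlim.congr' ?_ using 2
    · push_cast
      field_simp
      ring
    · filter_upwards [eventually_ne_atTop 0] with x hx
      exact mul_div_mul_left _ _ (pow_ne_zero 2 hx)
  · have hlim := (tendsto_tsin_nhds_zero n).div (tendsto_tsin_nhds_zero (n + 1)) one_ne_zero
    rw [div_one] at hlim
    exact hlim.mono_left nhdsWithin_le_nhds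
end

section
/- For every integer n ≥ 2, the ratio T_cos (2n) x / T_sin n x tends to (2n-1)/(2n+1) as x → ∞, and tends to 1 as x → 0. -/
/-!
Both remainders are instances of `normalizedRemainder f e n`, with `(f, e) = (cos, 0)` and
`(sin, 1)`. Near `0`, `T_n - 1` is `(2n + e)! / x^(2n + e)` times the tail of the series beyond
degree `2n + e`, which is `O(x^(2n + e + 2))` by comparison with `∑ 1 / k!`; so `T_n → 1`. At infinity, peeling off one more term of the series gives
`x² T_n(x) = (2n + e)(2n + e - 1) + O(x⁻²)`, because `f` is bounded and the remaining partial
sum has degree `2n + e - 4`; the ratio of the two leading constants is `(2n - 1) / (2n + 1)`.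
-/

open Filter Finset Real Nat Topology

noncomputable def altTaylorSum (e n : ℕ) (x : ℝ) : ℝ :=
  ∑ k ∈ range n, (-1 : ℝ) ^ k * x ^ (2 * k + e) / (2 * k + e)!

noncomputable def normalizedRemainder (f : ℝ → ℝ) (e n : ℕ) (x : ℝ) : ℝ :=
  if x = 0 then 1 else (-1 : ℝ) ^ n * (2 * n + e)! / x ^ (2 * n + e) * (f x - altTaylorSum e n x)

lemma Tcos_eq_normalizedRemainder (n : ℕ) : Tcos n = normalizedRemainder cos 0 n := rfl

lemma Tsin_eq_normalizedRemainder (n : ℕ) : Tsin n = normalizedRemainder sin 1 n := rfl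

lemma altTaylorSum_succ (e n : ℕ) (x : ℝ) :
    altTaylorSum e (n + 1) x =
      altTaylorSum e n x + (-1 : ℝ) ^ n * x ^ (2 * n + e) / (2 * n + e)! :=
  sum_range_succ _ _

section

variable {f : ℝ → ℝ} {e : ℕ}

lemma normalizedRemainder_sub_one (n : ℕ) {x : ℝ} (hx : x ≠ 0) :
    normalizedRemainder f e n x - 1 =
      (-1 : ℝ) ^ n * (2 * n + e)! / x ^ (2 * n + e) * (f x - altTaylorSum e (n + 1) x) := by
  have hsq : ((-1 : ℝ) ^ n) ^ 2 = 1 := by rw [← pow_mul, mul_comm, pow_mul, neg_one_sq, one_pow]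
  rw [normalizedRemainder, if_neg hx, altTaylorSum_succ]
  field_simp
  linear_combination (x ^ (2 * n + e)) * hsq

lemma sq_mul_normalizedRemainder_succ_sub (n : ℕ) {x : ℝ} (hx : x ≠ 0) :
    x ^ 2 * normalizedRemainder f e (n + 1) x - (2 * n + e + 2) * (2 * n + e + 1) =
      (-1 : ℝ) ^ (n + 1) * (2 * n + e + 2)! * (f x - altTaylorSum e n x) / x ^ (2 * n + e) := by
  have hsq : ((-1 : ℝ) ^ n) ^ 2 = 1 := by rw [← pow_mul, mul_comm, pow_mul, neg_one_sq, one_pow]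
  have hfac : ((2 * n + e + 2)! : ℝ) = (2 * n + e + 2) * (2 * n + e + 1) * (2 * n + e)! := by
    push_cast [Nat.factorial_succ]; ring
  rw [normalizedRemainder, if_neg hx, altTaylorSum_succ,
    show 2 * (n + 1) + e = 2 * n + e + 2 by ring, hfac]
  field_simp
  linear_combination x ^ 2 * (x ^ (2 * n + e)) ^ 2 * hsq

lemma abs_sub_altTaylorSum_le_of_abs_le_one
    (hf : ∀ x, HasSum (fun k : ℕ => (-1 : ℝ) ^ k * x ^ (2 * k + e) / (2 * k + e)!) (f x))
    (n : ℕ) {x : ℝ} (hx : |x| ≤ 1) :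
    |f x - altTaylorSum e n x| ≤ (∑' k : ℕ, 1 / (k ! : ℝ)) * |x| ^ (2 * n + e) := by
  have hsummable : Summable fun k : ℕ => 1 / (k ! : ℝ) := by
    simpa using Real.summable_pow_div_factorial 1
  rw [mul_comm]
  refine ((hasSum_nat_add_iff' n).2 (hf x)).norm_le_of_bounded
    (hsummable.hasSum.mul_left (|x| ^ (2 * n + e))) fun k => ?_
  rw [Real.norm_eq_abs, abs_div, abs_mul, abs_pow, abs_pow, abs_neg, abs_one, one_pow, one_mul,
    Nat.abs_cast, mul_one_div]
  exact div_le_div₀ (by positivity) (pow_le_pow_of_le_one (abs_nonneg x) hx (by omega))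
    (by positivity) (by exact_mod_cast Nat.factorial_le (by omega))

lemma abs_sub_altTaylorSum_le_of_one_le (hf : ∀ x, |f x| ≤ 1) (n : ℕ) {x : ℝ}
    (hx : 1 ≤ x) :
    |f x - altTaylorSum e (n + 1) x| ≤ (n + 2) * x ^ (2 * n + e) := by
  have hterm : ∀ k ∈ range (n + 1), |(-1 : ℝ) ^ k * x ^ (2 * k + e) / (2 * k + e)!| ≤
      x ^ (2 * n + e) := fun k hk => by
    rw [abs_div, abs_mul, abs_pow, abs_neg, abs_one, one_pow, one_mul, Nat.abs_cast,
      abs_of_nonneg (by positivity)]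
    calc x ^ (2 * k + e) / (2 * k + e)! ≤ x ^ (2 * k + e) :=
          _root_.div_le_self (by positivity) (by exact_mod_cast (factorial_pos _))
      _ ≤ x ^ (2 * n + e) := pow_le_pow_right₀ hx (by simp at hk; omega)
  have hsum : |altTaylorSum e (n + 1) x| ≤ (n + 1) * x ^ (2 * n + e) := by
    simpa [altTaylorSum] using (abs_sum_le_sum_abs _ _).trans (sum_le_sum hterm)
  calc |f x - altTaylorSum e (n + 1) x| ≤ |f x| + |altTaylorSum e (n + 1) x| := abs_sub _ _
    _ ≤ x ^ (2 * n + e) + (n + 1) * x ^ (2 * n + e) :=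
        add_le_add ((hf x).trans (one_le_pow₀ hx)) hsum
    _ = (n + 2) * x ^ (2 * n + e) := by ring

lemma tendsto_normalizedRemainder_nhdsNE
    (hf : ∀ x, HasSum (fun k : ℕ => (-1 : ℝ) ^ k * x ^ (2 * k + e) / (2 * k + e)!) (f x))
    (n : ℕ) : Tendsto (normalizedRemainder f e n) (𝓝[≠] 0) (𝓝 1) := by
  rw [← tendsto_sub_nhds_zero_iff]
  set C := ∑' k : ℕ, 1 / (k ! : ℝ)
  refine squeeze_zero_norm' (a := fun x => (2 * n + e)! * C * x ^ 2) ?_ ?_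
  · filter_upwards [self_mem_nhdsWithin,
      nhdsWithin_le_nhds (Metric.closedBall_mem_nhds (0 : ℝ) one_pos)] with x hx0 hx1
    rw [mem_closedBall_zero_iff, norm_eq_abs] at hx1
    have hx : |x| ≠ 0 := abs_ne_zero.2 hx0
    calc ‖normalizedRemainder f e n x - 1‖
        = (2 * n + e)! / |x| ^ (2 * n + e) * |f x - altTaylorSum e (n + 1) x| := by
          simp [normalizedRemainder_sub_one n hx0]
      _ ≤ (2 * n + e)! / |x| ^ (2 * n + e) * (C * |x| ^ (2 * (n + 1) + e)) := by
          gcongr; exact abs_sub_altTaylorSum_le_of_abs_le_one hf (n + 1) hx1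
      _ = (2 * n + e)! * C * x ^ 2 := by
          rw [show 2 * (n + 1) + e = 2 * n + e + 2 by ring, pow_add _ (2 * n + e) 2, sq_abs]
          field_simp
  · have hcont : Continuous fun x : ℝ => (2 * n + e)! * C * x ^ 2 := by fun_prop
    simpa using (hcont.tendsto 0).mono_left nhdsWithin_le_nhds

lemma tendsto_sq_mul_normalizedRemainder_atTop (hf : ∀ x, |f x| ≤ 1) (n : ℕ) :
    Tendsto (fun x => x ^ 2 * normalizedRemainder f e (n + 2) x) atTop
      (𝓝 ((2 * n + e + 4) * (2 * n + e + 3))) := by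
  rw [← tendsto_sub_nhds_zero_iff]
  refine squeeze_zero_norm' (a := fun x => (2 * n + e + 4)! * (n + 2) / x ^ 2) ?_
    (tendsto_const_nhds.div_atTop (tendsto_pow_atTop two_ne_zero))
  filter_upwards [eventually_ge_atTop 1] with x hx
  have hx0 : 0 < x := one_pos.trans_le hx
  have key := sq_mul_normalizedRemainder_succ_sub (f := f) (e := e) (n + 1) hx0.ne'
  rw [show 2 * (n + 1) + e + 2 = 2 * n + e + 4 by ring,
    show 2 * (n + 1) + e = 2 * n + e + 2 by ring] at key
  push_cast at key
  calc ‖x ^ 2 * normalizedRemainder f e (n + 2) x - (2 * n + e + 4) * (2 * n + e + 3)‖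
      = (2 * n + e + 4)! * |f x - altTaylorSum e (n + 1) x| / x ^ (2 * n + e + 2) := by
        rw [show (2 * n + e + 4 : ℝ) * (2 * n + e + 3) =
          (2 * (n + 1) + e + 2) * (2 * (n + 1) + e + 1) by ring, key]
        simp [abs_of_pos hx0]
    _ ≤ (2 * n + e + 4)! * ((n + 2) * x ^ (2 * n + e)) / x ^ (2 * n + e + 2) := by
        gcongr; exact_mod_cast abs_sub_altTaylorSum_le_of_one_le hf n hx
    _ = (2 * n + e + 4)! * (n + 2) / x ^ 2 := by
        rw [pow_add _ (2 * n + e) 2]; field_simp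

end

theorem Tcos_Tsin_ratio_limits (n : ℕ) (hn : 2 ≤ n) :
    Filter.Tendsto (fun x => Tcos n x / Tsin n x) Filter.atTop
      (nhds ((2 * (n : ℝ) - 1) / (2 * n + 1))) ∧
    Filter.Tendsto (fun x => Tcos n x / Tsin n x) (nhdsWithin 0 {(0:ℝ)}ᶜ) (nhds 1) := by
  obtain ⟨m, rfl⟩ : ∃ m, n = m + 2 := ⟨n - 2, by omega⟩
  simp only [Tcos_eq_normalizedRemainder, Tsin_eq_normalizedRemainder]
  constructor
  · have hcos := tendsto_sq_mul_normalizedRemainder_atTop (e := 0) abs_cos_le_one m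
    have hsin := tendsto_sq_mul_normalizedRemainder_atTop (e := 1) abs_sin_le_one m
    have hval : (2 * ((m + 2 : ℕ) : ℝ) - 1) / (2 * (m + 2 : ℕ) + 1) =
        (2 * m + 4) * (2 * m + 3) / ((2 * m + 1 + 4) * (2 * m + 1 + 3)) := by
      push_cast; field_simp; ring
    simp only [Nat.cast_zero, Nat.cast_one, add_zero] at hcos hsin
    rw [hval]
    refine (hcos.div hsin (by positivity)).congr' ?_
    filter_upwards [eventually_ne_atTop 0] with x hx
    exact mul_div_mul_left _ _ (pow_ne_zero 2 hx)
  · have hcos := tendsto_normalizedRemainder_nhdsNE (e := 0) hasSum_cos (m + 2)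
    have hsin := tendsto_normalizedRemainder_nhdsNE (e := 1) hasSum_sin (m + 2)
    exact div_one (1 : ℝ) ▸ hcos.div hsin one_ne_zero
end

section
/- For every natural number n, the function x ↦ E n x is positive on ℝ, strictly increasing on ℝ, and logarithmically convex on ℝ (i.e., x ↦ ln (E n x) is convex on ℝ). -/
/-!
Taylor's formula with integral remainder gives
`E n x = (n + 1) * ∫ t in 0..1, (1 - t) ^ n * exp (x * t)`, also at `x = 0` since
`∫ t in 0..1, (1 - t) ^ n = 1 / (n + 1)`. The integrand is positive and strictly increasing in `x`.
Log-convexity is Hölder's inequality: for `a + b = 1` the integrand at `a * x + b * y` is the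
product of the `a`-th power of the integrand at `x` and the `b`-th power of the one at `y`.
-/

/-- The `n`-th normalized remainder of the Maclaurin series of the exponential. -/
noncomputable def E (n : ℕ) (x : ℝ) : ℝ :=
  if x = 0 then 1
  else (Nat.factorial (n + 1)) / x ^ (n + 1) *
    (Real.exp x - ∑ k ∈ Finset.range (n + 1), x ^ k / (Nat.factorial k))

open Real MeasureTheory Set
open scoped Nat

theorem MeasureTheory.integral_rpow_mul_rpow_le {α : Type*} [MeasurableSpace α] {μ : Measure α}
    {f g : α → ℝ} (hf : 0 ≤ᵐ[μ] f) (hg : 0 ≤ᵐ[μ] g) (hfi : Integrable f μ) (hgi : Integrable g μ)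
    {p q : ℝ} (hp : 0 ≤ p) (hq : 0 ≤ q) (hpq : p + q = 1) :
    ∫ a, f a ^ p * g a ^ q ∂μ ≤ (∫ a, f a ∂μ) ^ p * (∫ a, g a ∂μ) ^ q := by
  have hfg : 0 ≤ᵐ[μ] fun a => f a ^ p * g a ^ q := by
    filter_upwards [hf, hg] with a ha hb
    exact mul_nonneg (rpow_nonneg ha p) (rpow_nonneg hb q)
  have hofReal : (fun a => ENNReal.ofReal (f a ^ p * g a ^ q)) =ᵐ[μ]
      fun a => ENNReal.ofReal (f a) ^ p * ENNReal.ofReal (g a) ^ q := by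
    filter_upwards [hf, hg] with a ha hb
    rw [ENNReal.ofReal_mul (rpow_nonneg ha p), ENNReal.ofReal_rpow_of_nonneg ha hp,
      ENNReal.ofReal_rpow_of_nonneg hb hq]
  have hholder := ENNReal.lintegral_mul_norm_pow_le hfi.1.aemeasurable.ennreal_ofReal
    hgi.1.aemeasurable.ennreal_ofReal hp hq hpq
  rw [integral_eq_lintegral_of_nonneg_ae hf hfi.1, integral_eq_lintegral_of_nonneg_ae hg hgi.1,
    integral_eq_lintegral_of_nonneg_ae hfg ((hfi.1.aemeasurable.pow_const p).mul
      (hgi.1.aemeasurable.pow_const q)).aestronglyMeasurable,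
    lintegral_congr_ae hofReal, ENNReal.toReal_rpow, ENNReal.toReal_rpow, ← ENNReal.toReal_mul]
  exact ENNReal.toReal_mono (ENNReal.mul_ne_top (ENNReal.rpow_ne_top_of_nonneg hp
    hfi.lintegral_lt_top.ne) (ENNReal.rpow_ne_top_of_nonneg hq hgi.lintegral_lt_top.ne)) hholder

theorem MeasureTheory.convexOn_log_integral_mul_exp {α : Type*} [MeasurableSpace α]
    {μ : Measure α} {w g : α → ℝ} (hw : 0 ≤ᵐ[μ] w)
    (hint : ∀ x, Integrable (fun a => w a * exp (x * g a)) μ)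
    (hpos : ∀ x, 0 < ∫ a, w a * exp (x * g a) ∂μ) :
    ConvexOn ℝ univ fun x => log (∫ a, w a * exp (x * g a) ∂μ) := by
  refine ⟨convex_univ, fun x _ y _ a b ha hb hab => ?_⟩
  have hsplit : (fun t => w t * exp ((a • x + b • y) * g t)) =ᵐ[μ]
      fun t => (w t * exp (x * g t)) ^ a * (w t * exp (y * g t)) ^ b := by
    filter_upwards [hw] with t ht
    rw [mul_rpow ht (exp_pos _).le, mul_rpow ht (exp_pos _).le, ← exp_mul, ← exp_mul,
      mul_mul_mul_comm, ← rpow_add' ht (by rw [hab]; exact one_ne_zero), hab, rpow_one,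
      ← exp_add, smul_eq_mul, smul_eq_mul]
    ring_nf
  have hholder := integral_rpow_mul_rpow_le (hw.mono fun t ht => mul_nonneg ht (exp_pos _).le)
    (hw.mono fun t ht => mul_nonneg ht (exp_pos _).le) (hint x) (hint y) ha hb hab
  rw [← integral_congr_ae hsplit] at hholder
  calc log (∫ t, w t * exp ((a • x + b • y) * g t) ∂μ)
      ≤ log ((∫ t, w t * exp (x * g t) ∂μ) ^ a * (∫ t, w t * exp (y * g t) ∂μ) ^ b) :=
        log_le_log (hpos _) hholder
    _ = a • log (∫ t, w t * exp (x * g t) ∂μ) + b • log (∫ t, w t * exp (y * g t) ∂μ) := by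
        rw [log_mul (rpow_pos_of_pos (hpos x) a).ne' (rpow_pos_of_pos (hpos y) b).ne',
          log_rpow (hpos x), log_rpow (hpos y), smul_eq_mul, smul_eq_mul]

noncomputable def expRemainderIntegral (n : ℕ) (x : ℝ) : ℝ :=
  ∫ t in (0:ℝ)..1, (1 - t) ^ n * exp (x * t)

theorem exp_eq_sum_add_expRemainderIntegral (n : ℕ) (x : ℝ) :
    exp x = ∑ k ∈ Finset.range (n + 1), x ^ k / k ! +
      x ^ (n + 1) / n ! * expRemainderIntegral n x := by
  have h := map_add_eq_sum_add_integral_iteratedFDeriv (f := exp) (x := 0) (y := x) (n := n)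
    fun _ _ => contDiff_exp.contDiffAt
  simp only [iteratedFDeriv_apply_eq_iteratedDeriv_mul_prod, iteratedDeriv_eq_iterate,
    iter_deriv_exp, Finset.prod_const, Finset.card_univ, Fintype.card_fin, zero_add, smul_eq_mul,
    exp_zero, mul_one, mul_left_comm _ (x ^ (n + 1)), intervalIntegral.integral_const_mul,
    mul_comm _ x] at h
  simp only [h, expRemainderIntegral, div_eq_inv_mul]
  ring

theorem expRemainderIntegral_zero (n : ℕ) : expRemainderIntegral n 0 = (n + 1 : ℝ)⁻¹ := by
  simp only [expRemainderIntegral, zero_mul, exp_zero, mul_one]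
  rw [intervalIntegral.integral_comp_sub_left (fun t => t ^ n), integral_pow]
  norm_num

theorem E_eq_mul_expRemainderIntegral (n : ℕ) (x : ℝ) :
    E n x = (n + 1) * expRemainderIntegral n x := by
  rcases eq_or_ne x 0 with rfl | hx
  · rw [E, if_pos rfl, expRemainderIntegral_zero, mul_inv_cancel₀ n.cast_add_one_ne_zero]
  · rw [E, if_neg hx, exp_eq_sum_add_expRemainderIntegral n x, add_sub_cancel_left,
      Nat.factorial_succ]
    push_cast
    field_simp

theorem continuous_expRemainderIntegrand (n : ℕ) (x : ℝ) :
    Continuous fun t : ℝ => (1 - t) ^ n * exp (x * t) := by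
  fun_prop

theorem expRemainderIntegral_pos (n : ℕ) (x : ℝ) : 0 < expRemainderIntegral n x := by
  refine intervalIntegral.intervalIntegral_pos_of_pos_on
    ((continuous_expRemainderIntegrand n x).intervalIntegrable _ _) (fun t ht => ?_) one_pos
  have : 0 < 1 - t := sub_pos.2 ht.2
  positivity

theorem strictMono_expRemainderIntegral (n : ℕ) : StrictMono (expRemainderIntegral n) := by
  intro x y hxy
  refine intervalIntegral.integral_lt_integral_of_continuousOn_of_le_of_exists_lt one_pos
    (continuous_expRemainderIntegrand n x).continuousOn
    (continuous_expRemainderIntegrand n y).continuousOn (fun t ht => ?_) ⟨1 / 2, ?_, ?_⟩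
  · have : 0 ≤ 1 - t := sub_nonneg.2 ht.2
    gcongr
    exact ht.1.le
  · norm_num
  · gcongr

theorem convexOn_log_expRemainderIntegral (n : ℕ) :
    ConvexOn ℝ univ fun x => log (expRemainderIntegral n x) := by
  simp only [expRemainderIntegral, intervalIntegral.integral_of_le zero_le_one]
  refine convexOn_log_integral_mul_exp (g := id) ?_ (fun x => ?_) (fun x => ?_)
  · exact ae_restrict_of_forall_mem measurableSet_Ioc fun t ht => pow_nonneg (sub_nonneg.2 ht.2) n
  · exact (continuous_expRemainderIntegrand n x).integrableOn_Icc.mono_set Ioc_subset_Icc_self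
  · simpa [expRemainderIntegral, intervalIntegral.integral_of_le zero_le_one] using
      expRemainderIntegral_pos n x

theorem E_pos_strictMono_logConvex (n : ℕ) :
    (∀ x : ℝ, 0 < E n x) ∧ StrictMono (E n) ∧
    ConvexOn ℝ Set.univ (fun x => Real.log (E n x)) := by
  have hn : (0 : ℝ) < n + 1 := n.cast_add_one_pos
  have hE : E n = fun x => (n + 1) * expRemainderIntegral n x :=
    funext (E_eq_mul_expRemainderIntegral n)
  have hlog : (fun x => log (E n x)) = fun x => log (expRemainderIntegral n x) + log (n + 1) := by
    ext x
    rw [hE, log_mul hn.ne' (expRemainderIntegral_pos n x).ne', add_comm]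
  refine ⟨fun x => ?_, ?_, ?_⟩
  · rw [hE]
    exact mul_pos hn (expRemainderIntegral_pos n x)
  · rw [hE]
    exact (strictMono_expRemainderIntegral n).const_mul hn
  · rw [hlog]
    exact (convexOn_log_expRemainderIntegral n).add_const _
end

section
/- For every natural number n, the function x ↦ E n x is absolutely monotonic on ℝ, that is, for every k ∈ ℕ₀ the k-th derivative of x ↦ E n x is nonnegative at every real x. -/
/-!
Taylor's formula with integral remainder, rescaled to `[0, 1]`, gives
`E n x = (n + 1) ∫₀¹ (1 - t)ⁿ eˣᵗ dt`, i.e. `E n` is the moment generating function of the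
`Beta(1, n + 1)` distribution. Its `k`-th derivative is `∫ tᵏ eˣᵗ` against that distribution,
which is nonnegative because the distribution lives on `[0, 1]`.
-/

open MeasureTheory Real Set
open scoped Nat

namespace ProbabilityTheory

variable {Ω : Type*} {m : MeasurableSpace Ω} {X : Ω → ℝ} {μ : Measure Ω}

lemma integrableExpSet_eq_univ_of_ae_abs_le [IsFiniteMeasure μ] (hX : AEMeasurable X μ) {C : ℝ}
    (hC : ∀ᵐ ω ∂μ, |X ω| ≤ C) : integrableExpSet X μ = univ := by
  refine eq_univ_of_forall fun t ↦ Integrable.of_bound (by fun_prop) (exp (|t| * C)) ?_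
  filter_upwards [hC] with ω hω
  rw [norm_of_nonneg (exp_nonneg _), exp_le_exp]
  calc t * X ω ≤ |t| * |X ω| := by rw [← abs_mul]; exact le_abs_self _
    _ ≤ |t| * C := by gcongr

lemma iteratedDeriv_mgf_nonneg (hX : 0 ≤ᵐ[μ] X) {t : ℝ}
    (ht : t ∈ interior (integrableExpSet X μ)) (n : ℕ) : 0 ≤ iteratedDeriv n (mgf X μ) t := by
  rw [iteratedDeriv_mgf ht]
  refine integral_nonneg_of_ae ?_
  filter_upwards [hX] with ω hω
  exact mul_nonneg (pow_nonneg hω n) (exp_nonneg _)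

lemma measurable_betaPDF (α β : ℝ) : Measurable (betaPDF α β) :=
  (measurable_betaPDFReal α β).ennreal_ofReal

lemma betaPDFReal_eq_zero_of_notMem {α β t : ℝ} (ht : t ∉ Ioo 0 1) : betaPDFReal α β t = 0 :=
  if_neg ht

lemma betaPDFReal_nonneg {α β : ℝ} (hα : 0 < α) (hβ : 0 < β) (t : ℝ) :
    0 ≤ betaPDFReal α β t := by
  by_cases ht : t ∈ Ioo 0 1
  · exact (betaPDFReal_pos ht.1 ht.2 hα hβ).le
  · exact (betaPDFReal_eq_zero_of_notMem ht).ge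

lemma betaPDFReal_one_left {β t : ℝ} (hβ : 0 < β) (ht : t ∈ Ioo 0 1) :
    betaPDFReal 1 β t = β * (1 - t) ^ (β - 1) := by
  rw [betaPDFReal, if_pos (mem_Ioo.1 ht), beta, Gamma_one, add_comm, Gamma_add_one hβ.ne', sub_self,
    rpow_zero]
  have := (Gamma_pos_of_pos hβ).ne'
  field_simp

lemma ae_mem_Ioo_betaMeasure (α β : ℝ) : ∀ᵐ t ∂betaMeasure α β, t ∈ Ioo 0 1 := by
  rw [betaMeasure, ae_withDensity_iff (measurable_betaPDF α β)]
  refine ae_of_all _ fun t ht ↦ ?_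
  by_contra h
  exact ht (by simp [betaPDF, betaPDFReal_eq_zero_of_notMem h])

lemma integrableExpSet_betaMeasure {α β : ℝ} (hα : 0 < α) (hβ : 0 < β) :
    integrableExpSet id (betaMeasure α β) = univ := by
  have := isProbabilityMeasureBeta hα hβ
  refine integrableExpSet_eq_univ_of_ae_abs_le aemeasurable_id (C := 1) ?_
  filter_upwards [ae_mem_Ioo_betaMeasure α β] with t ht
  rw [id_eq, abs_le]
  exact ⟨by linarith [ht.1], ht.2.le⟩

lemma mgf_betaMeasure {α β : ℝ} (hα : 0 < α) (hβ : 0 < β) (x : ℝ) :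
    mgf id (betaMeasure α β) x = ∫ t in 0..1, betaPDFReal α β t * exp (x * t) := by
  rw [mgf, betaMeasure, integral_withDensity_eq_integral_toReal_smul (measurable_betaPDF α β)
    (ae_of_all _ fun _ ↦ ENNReal.ofReal_lt_top), intervalIntegral.integral_of_le zero_le_one,
    ← setIntegral_eq_integral_of_forall_compl_eq_zero (s := Ioc 0 1)]
  · simp [betaPDF, ENNReal.toReal_ofReal (betaPDFReal_nonneg hα hβ _)]
  · intro t ht
    have : t ∉ Ioo 0 1 := fun h ↦ ht (Ioo_subset_Ioc_self h)
    simp [betaPDF, betaPDFReal_eq_zero_of_notMem this]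

lemma mgf_betaMeasure_one_natCast_add_one (n : ℕ) (x : ℝ) :
    mgf id (betaMeasure 1 (n + 1)) x = (n + 1) * ∫ t in 0..1, (1 - t) ^ n * exp (x * t) := by
  rw [mgf_betaMeasure one_pos n.cast_add_one_pos, ← intervalIntegral.integral_const_mul]
  refine intervalIntegral.integral_congr_uIoo fun t ht ↦ ?_
  rw [uIoo_of_le zero_le_one] at ht
  rw [betaPDFReal_one_left n.cast_add_one_pos ht, add_sub_cancel_right, rpow_natCast, mul_assoc]

end ProbabilityTheory

open ProbabilityTheory

lemma iteratedDerivWithin_exp_uIcc {a b : ℝ} (hab : a ≠ b) (k : ℕ) {t : ℝ} (ht : t ∈ uIcc a b) :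
    iteratedDerivWithin k exp (uIcc a b) t = exp t := by
  rw [iteratedDerivWithin_eq_iteratedDeriv (uniqueDiffOn_uIcc hab) contDiff_exp.contDiffAt ht,
    iteratedDeriv_eq_iterate, iter_deriv_exp]

lemma exp_sub_sum_range_eq_integral (n : ℕ) {x : ℝ} (hx : x ≠ 0) :
    exp x - ∑ k ∈ Finset.range (n + 1), x ^ k / k ! =
      x ^ (n + 1) / n ! * ∫ t in 0..1, (1 - t) ^ n * exp (x * t) := by
  have hderiv := iteratedDerivWithin_exp_uIcc hx.symm
  have taylor := taylor_integral_remainder (f := exp) (x₀ := 0) (x := x) (n := n)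
    contDiff_exp.contDiffOn
  rw [taylor_within_apply] at taylor
  have hpoly : ∑ k ∈ Finset.range (n + 1), ((k ! : ℝ)⁻¹ * (x - 0) ^ k) •
      iteratedDerivWithin k exp (uIcc 0 x) 0 = ∑ k ∈ Finset.range (n + 1), x ^ k / k ! := by
    refine Finset.sum_congr rfl fun k _ ↦ ?_
    rw [hderiv k left_mem_uIcc, exp_zero, smul_eq_mul, mul_one, sub_zero, inv_mul_eq_div]
  have hint : ∫ t in 0..x, ((x - t) ^ n / n !) • iteratedDerivWithin (n + 1) exp (uIcc 0 x) t =
      ∫ t in 0..x, (x - t) ^ n / n ! * exp t :=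
    intervalIntegral.integral_congr fun t ht ↦ by rw [hderiv _ ht, smul_eq_mul]
  have hscale : ∫ t in 0..x, (x - t) ^ n / n ! * exp t =
      x * ∫ s in 0..1, (x - x * s) ^ n / n ! * exp (x * s) := by
    simpa using (intervalIntegral.smul_integral_comp_mul_left
      (fun t ↦ (x - t) ^ n / n ! * exp t) x (a := 0) (b := 1)).symm
  rw [hpoly, hint, hscale] at taylor
  rw [taylor, ← intervalIntegral.integral_const_mul, ← intervalIntegral.integral_const_mul]
  refine intervalIntegral.integral_congr fun s _ ↦ ?_
  rw [← mul_one_sub, mul_pow]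
  field_simp
  ring

lemma E_eq_mgf_betaMeasure (n : ℕ) : E n = mgf id (betaMeasure 1 (n + 1)) := by
  funext x
  by_cases hx : x = 0
  · have := isProbabilityMeasureBeta one_pos n.cast_add_one_pos
    rw [E, if_pos hx, hx, mgf_zero]
  · rw [E, if_neg hx, exp_sub_sum_range_eq_integral n hx, mgf_betaMeasure_one_natCast_add_one,
      Nat.factorial_succ]
    generalize (∫ t in (0 : ℝ)..1, (1 - t) ^ n * exp (x * t)) = I
    push_cast
    field_simp

theorem E_absolutely_monotonic (n : ℕ) (k : ℕ) (x : ℝ) :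
    0 ≤ iteratedDeriv k (E n) x := by
  rw [E_eq_mgf_betaMeasure]
  refine iteratedDeriv_mgf_nonneg ?_ ?_ k
  · filter_upwards [ae_mem_Ioo_betaMeasure 1 (n + 1)] with t ht using ht.1.le
  · rw [integrableExpSet_betaMeasure one_pos n.cast_add_one_pos, interior_univ]
    exact mem_univ x
end

section
/- For every natural number n, the ratio x ↦ E (n+1) x / E n x is decreasing on all of ℝ. -/
/-!
Taylor's formula with integral remainder gives `E n x = (n + 1) * I n x`, where
`I n x = ∫₀¹ (1 - u)ⁿ e^{xu} du`, so the claim is `I (n+1) y * I n x ≤ I (n+1) x * I n y`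
for `x ≤ y`. Writing both products as double integrals over `[0,1]²` and symmetrizing in the two
variables, the integrand of the difference becomes
`(1 - t)ⁿ (1 - s)ⁿ (s - t) (e^{xt + ys} - e^{xs + yt})`, which is nonnegative because the
exponent difference is `(y - x)(s - t)`.
-/

open Real Set intervalIntegral
open MeasureTheory (volume)

section DoubleIntegral

variable {f g h k : ℝ → ℝ} {a b : ℝ}

lemma integral_mul_add_mul_swap (hf : IntervalIntegrable f volume a b)
    (hg : IntervalIntegrable g volume a b) (t : ℝ) :
    ∫ s in a..b, (f t * g s + f s * g t) = f t * (∫ s in a..b, g s) + (∫ s in a..b, f s) * g t := by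
  rw [integral_add (hg.const_mul _) (hf.mul_const _), integral_const_mul, integral_mul_const]

theorem integral_mul_integral_le_of_symm_le (hab : a ≤ b)
    (hf : IntervalIntegrable f volume a b) (hg : IntervalIntegrable g volume a b)
    (hh : IntervalIntegrable h volume a b) (hk : IntervalIntegrable k volume a b)
    (hle : ∀ t ∈ Icc a b, ∀ s ∈ Icc a b, h t * k s + h s * k t ≤ f t * g s + f s * g t) :
    (∫ s in a..b, h s) * (∫ s in a..b, k s) ≤ (∫ s in a..b, f s) * (∫ s in a..b, g s) := by
  have hsymm : ∀ {p q : ℝ → ℝ}, IntervalIntegrable p volume a b →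
      IntervalIntegrable q volume a b →
      ∫ t in a..b, (p t * (∫ s in a..b, q s) + (∫ s in a..b, p s) * q t)
        = 2 * ((∫ s in a..b, p s) * (∫ s in a..b, q s)) := by
    intro p q hp hq
    rw [integral_add (hp.mul_const _) (hq.const_mul _), integral_mul_const, integral_const_mul]
    ring
  suffices ∫ t in a..b, (h t * (∫ s in a..b, k s) + (∫ s in a..b, h s) * k t)
      ≤ ∫ t in a..b, (f t * (∫ s in a..b, g s) + (∫ s in a..b, f s) * g t) by
    rw [hsymm hh hk, hsymm hf hg] at this
    linarith
  refine integral_mono_on hab ((hh.mul_const _).add (hk.const_mul _))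
    ((hf.mul_const _).add (hg.const_mul _)) fun t ht => ?_
  rw [← integral_mul_add_mul_swap hh hk, ← integral_mul_add_mul_swap hf hg]
  exact integral_mono_on hab ((hk.const_mul _).add (hh.mul_const _))
    ((hg.const_mul _).add (hf.mul_const _)) (hle t ht)

end DoubleIntegral

noncomputable def remainderIntegral (m : ℕ) (x : ℝ) : ℝ :=
  ∫ u in (0 : ℝ)..1, (1 - u) ^ m * exp (x * u)

lemma intervalIntegrable_remainderIntegrand (m : ℕ) (x a b : ℝ) :
    IntervalIntegrable (fun u => (1 - u) ^ m * exp (x * u)) volume a b := by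
  apply Continuous.intervalIntegrable
  fun_prop

lemma remainderIntegral_pos (m : ℕ) (x : ℝ) : 0 < remainderIntegral m x :=
  intervalIntegral_pos_of_pos_on (intervalIntegrable_remainderIntegrand m x 0 1)
    (fun u hu => mul_pos (pow_pos (by linarith [hu.2]) m) (exp_pos _)) zero_lt_one

lemma remainderIntegral_zero_right (m : ℕ) : remainderIntegral m 0 = 1 / ((m : ℝ) + 1) := by
  simp only [remainderIntegral, zero_mul, exp_zero, mul_one]
  rw [integral_comp_sub_left (fun u : ℝ => u ^ m) 1]
  norm_num

lemma mul_remainderIntegral_zero (x : ℝ) : x * remainderIntegral 0 x = exp x - 1 := by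
  simp only [remainderIntegral, pow_zero, one_mul, mul_integral_comp_mul_left, mul_zero, mul_one,
    integral_exp, exp_zero]

/-- Integration by parts against `(1 - u)ᵐ⁺¹`, whose boundary term vanishes at `u = 1`. -/
lemma mul_remainderIntegral_succ (m : ℕ) (x : ℝ) :
    x * remainderIntegral (m + 1) x = (m + 1) * remainderIntegral m x - 1 := by
  have hderiv : ∀ u ∈ uIcc (0 : ℝ) 1,
      HasDerivAt (fun u => (1 - u) ^ (m + 1) * exp (x * u))
        (x * ((1 - u) ^ (m + 1) * exp (x * u)) - (m + 1) * ((1 - u) ^ m * exp (x * u))) u :=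
    fun u _ => ((((hasDerivAt_id' u).const_sub 1).fun_pow (m + 1)).fun_mul
      ((hasDerivAt_id' u).const_mul x).exp).congr_deriv (by push_cast [Nat.add_sub_cancel]; ring)
  have hsucc := (intervalIntegrable_remainderIntegrand (m + 1) x 0 1).const_mul x
  have hm := (intervalIntegrable_remainderIntegrand m x 0 1).const_mul ((m : ℝ) + 1)
  have hftc := integral_eq_sub_of_hasDerivAt hderiv (hsucc.sub hm)
  rw [integral_sub hsucc hm, integral_const_mul, integral_const_mul] at hftc
  simp only [sub_self, zero_pow (Nat.succ_ne_zero m), zero_mul, sub_zero, one_pow, mul_zero,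
    exp_zero, mul_one, zero_sub] at hftc
  rw [remainderIntegral, remainderIntegral]
  linarith

theorem exp_sub_sum_range_eq (m : ℕ) (x : ℝ) :
    exp x - ∑ k ∈ Finset.range (m + 1), x ^ k / k.factorial
      = x ^ (m + 1) / m.factorial * remainderIntegral m x := by
  induction m with
  | zero => simp [← mul_remainderIntegral_zero x]
  | succ m ih =>
    calc exp x - ∑ k ∈ Finset.range (m + 2), x ^ k / k.factorial
        = x ^ (m + 1) / m.factorial * remainderIntegral m x
            - x ^ (m + 1) / (m + 1).factorial := by
          rw [Finset.sum_range_succ, ← ih]; ring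
      _ = x ^ (m + 1) / (m + 1).factorial * (x * remainderIntegral (m + 1) x) := by
          rw [mul_remainderIntegral_succ, Nat.factorial_succ]; push_cast; field_simp
      _ = x ^ (m + 2) / (m + 1).factorial * remainderIntegral (m + 1) x := by ring

theorem E_eq_mul_remainderIntegral (m : ℕ) (x : ℝ) :
    E m x = ((m : ℝ) + 1) * remainderIntegral m x := by
  rcases eq_or_ne x 0 with rfl | hx
  · rw [E, if_pos rfl, remainderIntegral_zero_right]
    field_simp
  · rw [E, if_neg hx, exp_sub_sum_range_eq, Nat.factorial_succ]
    push_cast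
    field_simp

lemma sub_mul_exp_sub_exp_nonneg {x y : ℝ} (hxy : x ≤ y) (t s : ℝ) :
    0 ≤ (s - t) * (exp (x * t + y * s) - exp (x * s + y * t)) := by
  rcases le_total t s with hts | hst
  · exact mul_nonneg (by linarith) (sub_nonneg.mpr (exp_le_exp.mpr (by nlinarith)))
  · exact mul_nonneg_of_nonpos_of_nonpos (by linarith)
      (sub_nonpos.mpr (exp_le_exp.mpr (by nlinarith)))

theorem remainderIntegral_cross_le (n : ℕ) {x y : ℝ} (hxy : x ≤ y) :
    remainderIntegral (n + 1) y * remainderIntegral n x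
      ≤ remainderIntegral (n + 1) x * remainderIntegral n y := by
  have hint := intervalIntegrable_remainderIntegrand
  refine integral_mul_integral_le_of_symm_le zero_le_one (hint _ _ 0 1) (hint _ _ 0 1)
    (hint _ _ 0 1) (hint _ _ 0 1) fun t ht s hs => ?_
  have hweight : 0 ≤ (1 - t) ^ n * (1 - s) ^ n :=
    mul_nonneg (pow_nonneg (by linarith [ht.2]) n) (pow_nonneg (by linarith [hs.2]) n)
  have hsymm : (1 - t) ^ (n + 1) * exp (x * t) * ((1 - s) ^ n * exp (y * s))
        + (1 - s) ^ (n + 1) * exp (x * s) * ((1 - t) ^ n * exp (y * t))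
        - ((1 - t) ^ (n + 1) * exp (y * t) * ((1 - s) ^ n * exp (x * s))
          + (1 - s) ^ (n + 1) * exp (y * s) * ((1 - t) ^ n * exp (x * t)))
      = (1 - t) ^ n * (1 - s) ^ n * ((s - t) * (exp (x * t + y * s) - exp (x * s + y * t))) := by
    simp only [exp_add]
    ring
  linarith [mul_nonneg hweight (sub_mul_exp_sub_exp_nonneg hxy t s)]

theorem remainderIntegral_ratio_antitone (n : ℕ) :
    Antitone fun x => remainderIntegral (n + 1) x / remainderIntegral n x := by
  intro x y hxy
  rw [div_le_div_iff₀ (remainderIntegral_pos n y) (remainderIntegral_pos n x)]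
  exact remainderIntegral_cross_le n hxy

theorem E_ratio_antitone (n : ℕ) :
    Antitone (fun x => E (n + 1) x / E n x) := by
  have hE : (fun x => E (n + 1) x / E n x)
      = fun x => ((n + 2) / (n + 1) : ℝ) * (remainderIntegral (n + 1) x / remainderIntegral n x) := by
    funext x
    rw [E_eq_mul_remainderIntegral, E_eq_mul_remainderIntegral]
    push_cast
    field_simp
    ring
  rw [hE]
  exact (remainderIntegral_ratio_antitone n).const_mul (by positivity)
end

section
/- For every positive integer n and every real x, the inequality (∑_{j=0}^∞ (1/C(n+j+2, n)) x^j/j!) · (∑_{j=0}^∞ (1/C(n+j, n)) x^j/j!) ≥ (∑_{j=0}^∞ (1/C(n+j+1, n)) x^j/j!)² holds, where C(a, b) denotes the binomial coefficient a choose b. -/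
/-!
Since `1 / C(n + k, n) = n ∫₀¹ tᵏ (1 - t)ⁿ⁻¹ dt` (a Beta integral), summing against `xʲ / j!` turns
the series with shift `m` into the `m`-th moment `∫₀¹ tᵐ w(t) dt` of the positive weight
`w(t) = n (1 - t)ⁿ⁻¹ eˣᵗ`. The inequality is then Cauchy–Schwarz for these moments:
`(∫ t w)² ≤ (∫ w) (∫ t² w)`.
-/

open MeasureTheory Set Nat

theorem intervalIntegral_pow_mul_one_sub_pow (a b : ℕ) :
    ∫ t in (0 : ℝ)..1, t ^ a * (1 - t) ^ b = (a ! * b ! : ℝ) / (a + b + 1)! := by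
  have hβ := Complex.betaIntegral_eq_Gamma_mul_div (a + 1) (b + 1)
    (by simp; positivity) (by simp; positivity)
  rw [show (a + 1 : ℂ) + (b + 1) = ((a + b + 1 : ℕ) : ℂ) + 1 by push_cast; ring,
    Complex.Gamma_nat_eq_factorial, Complex.Gamma_nat_eq_factorial,
    Complex.Gamma_nat_eq_factorial, Complex.betaIntegral] at hβ
  simp only [add_sub_cancel_right, Complex.cpow_natCast] at hβ
  have h : ((∫ t in (0 : ℝ)..1, t ^ a * (1 - t) ^ b : ℝ) : ℂ)
      = ((a ! * b ! : ℝ) / (a + b + 1)! : ℝ) := by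
    rw [← intervalIntegral.integral_ofReal]; push_cast; exact hβ
  exact_mod_cast h

theorem one_div_choose_add_eq_integral {n : ℕ} (hn : 0 < n) (k : ℕ) :
    1 / ((n + k).choose n : ℝ) = n * ∫ t in (0 : ℝ)..1, t ^ k * (1 - t) ^ (n - 1) := by
  obtain ⟨m, rfl⟩ := Nat.exists_eq_add_one_of_ne_zero hn.ne'
  rw [intervalIntegral_pow_mul_one_sub_pow, Nat.add_sub_cancel,
    show k + m + 1 = k + (m + 1) by ring, ← Nat.add_choose_mul_factorial_mul_factorial,
    add_comm k]
  push_cast [Nat.factorial_succ]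
  field_simp

theorem hasSum_integral_pow_mul_pow_div_factorial {μ : Measure ℝ} {g : ℝ → ℝ}
    (hg : Integrable g μ) (hμ : ∀ᵐ t ∂μ, |t| ≤ 1) (x : ℝ) :
    HasSum (fun j ↦ (∫ t, t ^ j * g t ∂μ) * x ^ j / j !) (∫ t, Real.exp (x * t) * g t ∂μ) := by
  have hterm (j : ℕ) :
      (∫ t, t ^ j * g t ∂μ) * x ^ j / j ! = ∫ t, (x * t) ^ j / j ! * g t ∂μ := by
    rw [← integral_mul_const, ← integral_div]
    congr 1 with t
    ring
  simp_rw [hterm]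
  refine hasSum_integral_of_dominated_convergence (fun j t ↦ |x| ^ j / j ! * |g t|)
    (fun j ↦ (by fun_prop : Continuous fun t : ℝ ↦ (x * t) ^ j / j !).aestronglyMeasurable.mul
      hg.aestronglyMeasurable)
    (fun j ↦ hμ.mono fun t ht ↦ ?_)
    (ae_of_all _ fun t ↦ (Real.summable_pow_div_factorial |x|).mul_right |g t|)
    (by simpa only [tsum_mul_right] using hg.abs.const_mul _)
    (ae_of_all _ fun t ↦ ?_)
  · simp only [norm_mul, norm_div, norm_pow, Real.norm_eq_abs, Nat.abs_cast]
    gcongr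
    exact mul_le_of_le_one_right (abs_nonneg x) ht
  · simpa only [Real.exp_eq_exp_ℝ] using
      (NormedSpace.expSeries_div_hasSum_exp (x * t)).mul_right (g t)

theorem sq_integral_mul_le_integral_mul_integral_mul_sq {α : Type*} [MeasurableSpace α]
    {μ : Measure α} {w f : α → ℝ} (hw : 0 ≤ᵐ[μ] w) (hw_int : Integrable w μ)
    (hwf : Integrable (fun a ↦ w a * f a) μ) (hwf2 : Integrable (fun a ↦ w a * f a ^ 2) μ) :
    (∫ a, w a * f a ∂μ) ^ 2 ≤ (∫ a, w a ∂μ) * ∫ a, w a * f a ^ 2 ∂μ := by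
  have hquad (c : ℝ) : 0 ≤ (∫ a, w a ∂μ) * (c * c) + (-2 * ∫ a, w a * f a ∂μ) * c
      + ∫ a, w a * f a ^ 2 ∂μ := by
    have hexp : (fun a ↦ w a * (c - f a) ^ 2)
        = fun a ↦ c ^ 2 * w a - 2 * c * (w a * f a) + w a * f a ^ 2 := by
      ext a; ring
    have hint : Integrable (fun a ↦ c ^ 2 * w a - 2 * c * (w a * f a)) μ :=
      (hw_int.const_mul _).sub (hwf.const_mul _)
    calc (0 : ℝ) ≤ ∫ a, w a * (c - f a) ^ 2 ∂μ :=
          integral_nonneg_of_ae (hw.mono fun a ha ↦ mul_nonneg ha (sq_nonneg _))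
      _ = _ := by
          rw [hexp, integral_add hint hwf2, integral_sub (hw_int.const_mul _) (hwf.const_mul _),
            integral_const_mul, integral_const_mul]
          ring
  have := discrim_le_zero hquad
  rw [discrim] at this
  linarith

theorem tsum_one_div_choose_mul_pow_div_factorial {n : ℕ} (hn : 0 < n) (m : ℕ) (x : ℝ) :
    ∑' j : ℕ, 1 / ((n + j + m).choose n : ℝ) * x ^ j / j !
      = ∫ t in Ioc (0 : ℝ) 1, n * (1 - t) ^ (n - 1) * Real.exp (x * t) * t ^ m := by
  have hterm (j : ℕ) : 1 / ((n + j + m).choose n : ℝ)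
      = ∫ t in Ioc (0 : ℝ) 1, t ^ j * (n * (1 - t) ^ (n - 1) * t ^ m) := by
    rw [add_assoc, one_div_choose_add_eq_integral hn, intervalIntegral.integral_of_le zero_le_one,
      ← integral_const_mul]
    congr with t
    ring
  have hμ : ∀ᵐ t ∂volume.restrict (Ioc (0 : ℝ) 1), |t| ≤ 1 :=
    ae_restrict_of_forall_mem measurableSet_Ioc fun t ht ↦ abs_le.2 ⟨by linarith [ht.1], ht.2⟩
  rw [tsum_congr fun j ↦ by rw [hterm j], (hasSum_integral_pow_mul_pow_div_factorial
    (Continuous.integrableOn_Ioc (by fun_prop)) hμ x).tsum_eq]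
  congr with t
  ring

theorem binom_series_sq_ineq (n : ℕ) (hn : 0 < n) (x : ℝ) :
    (∑' j : ℕ, (1 / (Nat.choose (n + j + 2) n : ℝ)) * x ^ j / (Nat.factorial j)) *
      (∑' j : ℕ, (1 / (Nat.choose (n + j) n : ℝ)) * x ^ j / (Nat.factorial j)) ≥
    (∑' j : ℕ, (1 / (Nat.choose (n + j + 1) n : ℝ)) * x ^ j / (Nat.factorial j)) ^ 2 := by
  have h0 := tsum_one_div_choose_mul_pow_div_factorial hn 0 x
  simp only [add_zero, pow_zero, mul_one] at h0
  rw [tsum_one_div_choose_mul_pow_div_factorial hn 2,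
    tsum_one_div_choose_mul_pow_div_factorial hn 1, h0, ge_iff_le, mul_comm]
  simp only [pow_one]
  set w : ℝ → ℝ := fun t ↦ n * (1 - t) ^ (n - 1) * Real.exp (x * t)
  have hw : Continuous w := by fun_prop
  refine sq_integral_mul_le_integral_mul_integral_mul_sq (f := id)
    (ae_restrict_of_forall_mem measurableSet_Ioc fun t ht ↦ ?_) hw.integrableOn_Ioc
    (hw.mul continuous_id).integrableOn_Ioc (hw.mul (continuous_pow 2)).integrableOn_Ioc
  have : 0 ≤ 1 - t := by linarith [ht.2]
  positivity
end

section
/- For every natural number n ≥ 0 and every real x, the strict inequality (∑_{j=0}^∞ (1/C(j+n+2, n+1)) x^j/j!) · (∑_{j=0}^∞ (1/C(j+n, n)) x^j/j!) < (∑_{j=0}^∞ (1/C(j+n+1, n+1)) x^j/j!) · (∑_{j=0}^∞ (1/C(j+n+1, n)) x^j/j!) holds, where C(a, b) denotes the binomial coefficient a choose b. -/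
/-!
With `E m x = ∑ x ^ j / (j + m)!`, the four series are `n! E n`, `(n+1)! E (n+1)`,
`n! (E n - n E (n+1))` and `(n+1)! (E (n+1) - (n+1) E (n+2))`, so the inequality reduces to the
Turán-type inequality `n E(n+1)² < (n+1) E(n+2) E(n)`. Integrating the exponential series
termwise against `(1 - t)^k` and using the beta integral gives
`k! E (k+1) x = ∫₀¹ e^{xt} (1-t)^k dt`; in these terms the Turán inequality is the strict
Cauchy–Schwarz inequality for the weight `e^{xt} (1-t)^k` and the non-constant function `1 - t`.
-/

open Set intervalIntegral
open scoped Nat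

noncomputable def expTail (m : ℕ) (x : ℝ) : ℝ := ∑' j : ℕ, x ^ j / (j + m)!

theorem summable_pow_div_factorial_add (m : ℕ) (x : ℝ) :
    Summable fun j : ℕ => x ^ j / (j + m)! := by
  refine .of_norm_bounded (Real.summable_pow_div_factorial |x|) fun j => ?_
  rw [norm_div, norm_pow, Real.norm_eq_abs, Real.norm_natCast]
  gcongr
  exact Nat.le_add_right j m

theorem integral_pow_mul_one_sub_pow (j k : ℕ) :
    ∫ t in (0 : ℝ)..1, t ^ j * (1 - t) ^ k = (j ! * k ! : ℝ) / (j + k + 1)! := by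
  induction k generalizing j with
  | zero =>
    simp [integral_pow, Nat.factorial_succ, field]
  | succ k ih =>
    have hsplit (t : ℝ) :
        t ^ j * (1 - t) ^ (k + 1) = t ^ j * (1 - t) ^ k - t ^ (j + 1) * (1 - t) ^ k := by ring
    simp_rw [hsplit]
    rw [integral_sub (Continuous.intervalIntegrable (by fun_prop) _ _)
      (Continuous.intervalIntegrable (by fun_prop) _ _), ih, ih,
      show j + 1 + k + 1 = j + k + 1 + 1 by ring, show j + (k + 1) + 1 = j + k + 1 + 1 by ring]
    push_cast [Nat.factorial_succ]
    field_simp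
    ring

theorem integral_exp_mul_mul_one_sub_pow (k : ℕ) (x : ℝ) :
    ∫ t in (0 : ℝ)..1, Real.exp (x * t) * (1 - t) ^ k = k ! * expTail (k + 1) x := by
  have hterm (j : ℕ) : ∫ t in (0 : ℝ)..1, x ^ j / j ! * (t ^ j * (1 - t) ^ k) =
      k ! * (x ^ j / (j + (k + 1))!) := by
    rw [integral_const_mul, integral_pow_mul_one_sub_pow, ← add_assoc]
    field_simp
  have hbound (j : ℕ) (t : ℝ) (ht : t ∈ uIoc (0 : ℝ) 1) :
      ‖x ^ j / j ! * (t ^ j * (1 - t) ^ k)‖ ≤ |x| ^ j / j ! := by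
    rw [uIoc_of_le zero_le_one] at ht
    have ht' : |t ^ j * (1 - t) ^ k| ≤ 1 := by
      rw [abs_mul, abs_pow, abs_pow]
      exact mul_le_one₀ (pow_le_one₀ (abs_nonneg _) (abs_le.2 ⟨by linarith [ht.1], ht.2⟩))
        (by positivity)
        (pow_le_one₀ (abs_nonneg _) (abs_le.2 ⟨by linarith [ht.2], by linarith [ht.1]⟩))
    rw [Real.norm_eq_abs, abs_mul, abs_div, abs_pow, Nat.abs_cast]
    exact mul_le_of_le_one_right (by positivity) ht'
  have hsum : HasSum (fun j : ℕ => ∫ t in (0 : ℝ)..1, x ^ j / j ! * (t ^ j * (1 - t) ^ k))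
      (∫ t in (0 : ℝ)..1, Real.exp (x * t) * (1 - t) ^ k) := by
    refine hasSum_integral_of_dominated_convergence (fun j _ => |x| ^ j / j !)
      (fun j => Continuous.aestronglyMeasurable (by fun_prop))
      (fun j => MeasureTheory.ae_of_all _ (hbound j))
      (MeasureTheory.ae_of_all _ fun _ _ => Real.summable_pow_div_factorial |x|)
      intervalIntegrable_const (MeasureTheory.ae_of_all _ fun t _ => ?_)
    rw [show (fun j : ℕ => x ^ j / j ! * (t ^ j * (1 - t) ^ k)) =
        fun j => (x * t) ^ j / j ! * (1 - t) ^ k from funext fun j => by ring,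
      Real.exp_eq_exp_ℝ]
    exact (NormedSpace.expSeries_div_hasSum_exp (x * t)).mul_right _
  rw [expTail, ← tsum_mul_left, ← hsum.tsum_eq]
  exact tsum_congr hterm

theorem sq_integral_mul_lt_integral_mul_sq_mul_integral {w u : ℝ → ℝ} {a b : ℝ}
    (hab : a < b) (hw : Continuous w) (hu : Continuous u) (hw_nonneg : ∀ t ∈ Icc a b, 0 ≤ w t)
    (hu_nonconst : ∀ l, ∃ c ∈ Icc a b, 0 < w c ∧ u c ≠ l) :
    (∫ t in a..b, w t * u t) ^ 2 < (∫ t in a..b, w t * u t ^ 2) * ∫ t in a..b, w t := by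
  set A := ∫ t in a..b, w t
  set B := ∫ t in a..b, w t * u t
  set C := ∫ t in a..b, w t * u t ^ 2
  have hA : 0 < A := by
    obtain ⟨c, hc, hwc, -⟩ := hu_nonconst 0
    exact integral_pos hab hw.continuousOn (fun t ht => hw_nonneg t (Ioc_subset_Icc_self ht))
      ⟨c, hc, hwc⟩
  have hpos (l : ℝ) : 0 < ∫ t in a..b, w t * (u t - l) ^ 2 := by
    obtain ⟨c, hc, hwc, huc⟩ := hu_nonconst l
    exact integral_pos hab (by fun_prop)
      (fun t ht => mul_nonneg (hw_nonneg t (Ioc_subset_Icc_self ht)) (sq_nonneg _))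
      ⟨c, hc, mul_pos hwc (pow_two_pos_of_ne_zero (sub_ne_zero.2 huc))⟩
  have hexpand (l : ℝ) : ∫ t in a..b, w t * (u t - l) ^ 2 = C - 2 * l * B + l ^ 2 * A := by
    simp_rw [show ∀ t, w t * (u t - l) ^ 2 = w t * u t ^ 2 - 2 * l * (w t * u t) + l ^ 2 * w t
      from fun t => by ring]
    rw [integral_add, integral_sub, integral_const_mul, integral_const_mul]
    all_goals exact Continuous.intervalIntegrable (by fun_prop) _ _
  have h := mul_pos hA (hpos (B / A))
  rw [hexpand, show A * (C - 2 * (B / A) * B + (B / A) ^ 2 * A) = C * A - B ^ 2 by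
    field_simp; ring] at h
  linarith

theorem sq_integral_exp_mul_one_sub_pow_lt (k : ℕ) (x : ℝ) :
    (∫ t in (0 : ℝ)..1, Real.exp (x * t) * (1 - t) ^ (k + 1)) ^ 2 <
      (∫ t in (0 : ℝ)..1, Real.exp (x * t) * (1 - t) ^ (k + 2)) *
        ∫ t in (0 : ℝ)..1, Real.exp (x * t) * (1 - t) ^ k := by
  have h := sq_integral_mul_lt_integral_mul_sq_mul_integral
    (w := fun t => Real.exp (x * t) * (1 - t) ^ k) (u := fun t => 1 - t) zero_lt_one
    (by fun_prop) (by fun_prop)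
    (fun t ht => by have := ht.2; positivity) fun l => ?_
  · simpa only [mul_assoc, ← pow_succ, ← pow_add] using h
  · by_cases hl : l = 1
    · exact ⟨1 / 2, by norm_num, by positivity, by norm_num [hl]⟩
    · exact ⟨0, by norm_num, by simp, by simpa [eq_comm] using hl⟩

theorem expTail_pos (m : ℕ) (x : ℝ) : 0 < expTail m x := by
  cases m with
  | zero =>
    simpa [expTail, Real.exp_eq_exp_ℝ, NormedSpace.exp_eq_tsum_div] using Real.exp_pos x
  | succ k =>
    have h : 0 < ∫ t in (0 : ℝ)..1, Real.exp (x * t) * (1 - t) ^ k :=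
      intervalIntegral_pos_of_pos_on (Continuous.intervalIntegrable (by fun_prop) _ _)
        (fun t ht => by have := ht.2; positivity) zero_lt_one
    rw [integral_exp_mul_mul_one_sub_pow] at h
    exact pos_of_mul_pos_right h (by positivity)

theorem expTail_turan (n : ℕ) (x : ℝ) :
    n * expTail (n + 1) x ^ 2 < (n + 1) * expTail (n + 2) x * expTail n x := by
  cases n with
  | zero => simpa using mul_pos (expTail_pos 2 x) (expTail_pos 0 x)
  | succ k =>
    have h := sq_integral_exp_mul_one_sub_pow_lt k x
    rw [integral_exp_mul_mul_one_sub_pow, integral_exp_mul_mul_one_sub_pow,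
      integral_exp_mul_mul_one_sub_pow] at h
    refine lt_of_mul_lt_mul_left ?_ (by positivity : (0 : ℝ) ≤ (k + 1) * (k ! : ℝ) ^ 2)
    calc _ = ((k + 1)! * expTail (k + 2) x) ^ 2 := by push_cast [Nat.factorial_succ]; ring
      _ < _ := h
      _ = _ := by push_cast [Nat.factorial_succ]; ring

theorem one_div_choose_add_mul_pow_div_factorial (n j : ℕ) (x : ℝ) :
    1 / ((j + n).choose n : ℝ) * x ^ j / j ! = n ! * (x ^ j / (j + n)!) := by
  rw [Nat.cast_choose ℝ (Nat.le_add_left n j), Nat.add_sub_cancel]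
  field_simp

theorem one_div_choose_add_succ_mul_pow_div_factorial (n j : ℕ) (x : ℝ) :
    1 / ((j + n + 1).choose n : ℝ) * x ^ j / j ! =
      n ! * (x ^ j / (j + n)! - n * (x ^ j / (j + (n + 1))!)) := by
  rw [← add_assoc, Nat.cast_choose ℝ (by omega : n ≤ j + n + 1),
    show j + n + 1 - n = j + 1 by omega]
  push_cast [Nat.factorial_succ]
  field_simp
  ring

theorem tsum_one_div_choose_add (n : ℕ) (x : ℝ) :
    ∑' j : ℕ, 1 / ((j + n).choose n : ℝ) * x ^ j / j ! = n ! * expTail n x := by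
  simp_rw [one_div_choose_add_mul_pow_div_factorial, tsum_mul_left, expTail]

theorem tsum_one_div_choose_add_succ (n : ℕ) (x : ℝ) :
    ∑' j : ℕ, 1 / ((j + n + 1).choose n : ℝ) * x ^ j / j ! =
      n ! * (expTail n x - n * expTail (n + 1) x) := by
  simp_rw [one_div_choose_add_succ_mul_pow_div_factorial, tsum_mul_left]
  rw [(summable_pow_div_factorial_add n x).tsum_sub
    ((summable_pow_div_factorial_add (n + 1) x).mul_left _), tsum_mul_left]
  rfl

theorem binom_series_strict_ineq (n : ℕ) (x : ℝ) :
    (∑' j : ℕ, (1 / (Nat.choose (j + n + 2) (n + 1) : ℝ)) * x ^ j / (Nat.factorial j)) *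
      (∑' j : ℕ, (1 / (Nat.choose (j + n) n : ℝ)) * x ^ j / (Nat.factorial j)) <
    (∑' j : ℕ, (1 / (Nat.choose (j + n + 1) (n + 1) : ℝ)) * x ^ j / (Nat.factorial j)) *
      (∑' j : ℕ, (1 / (Nat.choose (j + n + 1) n : ℝ)) * x ^ j / (Nat.factorial j)) := by
  -- `j + n + 2` and `j + n + 1` agree with `j + (n + 1) + 1` and `j + (n + 1)` only up to defeq
  erw [tsum_one_div_choose_add_succ (n + 1), tsum_one_div_choose_add (n + 1)]
  rw [tsum_one_div_choose_add, tsum_one_div_choose_add_succ]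
  have key :=
    mul_lt_mul_of_pos_left (expTail_turan n x) (by positivity : (0 : ℝ) < (n + 1)! * n !)
  push_cast at key ⊢
  linear_combination key
end

section
/- For every positive integer n, the ratio t ↦ B_{2n-1}(t)/B_{2n+1}(t) of Bernoulli polynomials is strictly increasing on the open interval (0, 1/2) and strictly decreasing on the open interval (1/2, 1). -/
/-- The classical Bernoulli polynomial `B_k` evaluated at a real number `t`. -/
noncomputable def bernPoly (k : ℕ) (t : ℝ) : ℝ :=
  Polynomial.aeval t (Polynomial.bernoulli k)

/-!
Monotone L'Hôpital rule: if `f` and `g` vanish at one endpoint of an interval and `f' / g'` is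
strictly increasing, then so is `f / g`. Applying it twice, first to `u t / (t - c)` and
`v t / (t - c)` (vanishing at `a`), then to the numerators `(t - c) u' t - u t` and
`(t - c) v' t - v t` of their derivatives (vanishing at `c`, with derivatives `(t - c) u'' t` and
`(t - c) v'' t`), shows that `u / v` is strictly increasing on `(a, c)` whenever `u` and `v`
vanish at `a` and `c` and `u'' / v''` is strictly increasing.

For `m ≥ 1` the odd Bernoulli polynomials `B_{2m+1}` and `B_{2m+3}` vanish at `0` and `1/2`, and
`B_k'' = k (k - 1) B_{k-2}`, so `B_{2m+1} / B_{2m+3}` inherits monotonicity on `(0, 1/2)` from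
`B_{2m-1} / B_{2m+1}`, starting from `B_1 / B_3 = 1 / (t (t - 1))`. Rolle's theorem, applied in
the same way, shows that the odd Bernoulli polynomials do not vanish on `(0, 1/2)`. The interval
`(1/2, 1)` follows from the symmetry `B_k (1 - t) = (-1)^k B_k t`.
-/

open Set

section MonotoneLHopital

variable {f g f' g' : ℝ → ℝ}

lemma div_lt_add_div_add_of_div_lt {a b c d : ℝ} (hb : 0 < b) (hd : 0 < d) (h : a / b < c / d) :
    a / b < (a + c) / (b + d) ∧ (a + c) / (b + d) < c / d := by
  rw [div_lt_div_iff₀ hb hd] at h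
  constructor <;> rw [div_lt_div_iff₀ (by positivity) (by positivity)] <;> nlinarith

/-- By Cauchy's mean value theorem the slopes over `[x, y]` and `[y, z]` are values of `f' / g'`
at points `ξ < η`, and the slope over `[x, z]` is their mediant. -/
lemma cauchy_slope_lt_of_deriv_pos {x y z : ℝ} (hxy : x < y) (hyz : y < z)
    (hfc : ContinuousOn f (Icc x z)) (hgc : ContinuousOn g (Icc x z))
    (hf : ∀ t ∈ Ioo x z, HasDerivAt f (f' t) t) (hg : ∀ t ∈ Ioo x z, HasDerivAt g (g' t) t)
    (hg' : ∀ t ∈ Ioo x z, 0 < g' t) (hmono : StrictMonoOn (fun t => f' t / g' t) (Ioo x z)) :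
    (f y - f x) / (g y - g x) < (f z - f x) / (g z - g x) ∧
      (f z - f x) / (g z - g x) < (f z - f y) / (g z - g y) := by
  have hgmono : StrictMonoOn g (Icc x z) :=
    strictMonoOn_of_hasDerivWithinAt_pos (convex_Icc x z) hgc
      (fun t ht => by rw [interior_Icc] at ht ⊢; exact (hg t ht).hasDerivWithinAt)
      (fun t ht => by rw [interior_Icc] at ht; exact hg' t ht)
  have hx : x ∈ Icc x z := left_mem_Icc.2 (hxy.trans hyz).le
  have hy : y ∈ Icc x z := ⟨hxy.le, hyz.le⟩
  have hz : z ∈ Icc x z := right_mem_Icc.2 (hxy.trans hyz).le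
  have hgxy : 0 < g y - g x := sub_pos.2 (hgmono hx hy hxy)
  have hgyz : 0 < g z - g y := sub_pos.2 (hgmono hy hz hyz)
  obtain ⟨ξ, hξ, hξeq⟩ := exists_ratio_hasDerivAt_eq_ratio_slope f f' hxy
    (hfc.mono (Icc_subset_Icc_right hyz.le)) (fun t ht => hf t ⟨ht.1, ht.2.trans hyz⟩)
    g g' (hgc.mono (Icc_subset_Icc_right hyz.le)) (fun t ht => hg t ⟨ht.1, ht.2.trans hyz⟩)
  obtain ⟨η, hη, hηeq⟩ := exists_ratio_hasDerivAt_eq_ratio_slope f f' hyz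
    (hfc.mono (Icc_subset_Icc_left hxy.le)) (fun t ht => hf t ⟨hxy.trans ht.1, ht.2⟩)
    g g' (hgc.mono (Icc_subset_Icc_left hxy.le)) (fun t ht => hg t ⟨hxy.trans ht.1, ht.2⟩)
  have hξη : f' ξ / g' ξ < f' η / g' η :=
    hmono ⟨hξ.1, hξ.2.trans hyz⟩ ⟨hxy.trans hη.1, hη.2⟩ (hξ.2.trans hη.1)
  have hslope : (f y - f x) / (g y - g x) < (f z - f y) / (g z - g y) := by
    have hξ' := hg' ξ ⟨hξ.1, hξ.2.trans hyz⟩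
    have hη' := hg' η ⟨hxy.trans hη.1, hη.2⟩
    have hξr : f' ξ / g' ξ = (f y - f x) / (g y - g x) :=
      (div_eq_div_iff hξ'.ne' hgxy.ne').2 (by linarith)
    have hηr : f' η / g' η = (f z - f y) / (g z - g y) :=
      (div_eq_div_iff hη'.ne' hgyz.ne').2 (by linarith)
    rwa [hξr, hηr] at hξη
  have hf_split : f z - f x = (f y - f x) + (f z - f y) := by ring
  have hg_split : g z - g x = (g y - g x) + (g z - g y) := by ring
  rw [hf_split, hg_split]
  exact div_lt_add_div_add_of_div_lt hgxy hgyz hslope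

lemma cauchy_slope_lt {x y z : ℝ} (hxy : x < y) (hyz : y < z)
    (hfc : ContinuousOn f (Icc x z)) (hgc : ContinuousOn g (Icc x z))
    (hf : ∀ t ∈ Ioo x z, HasDerivAt f (f' t) t) (hg : ∀ t ∈ Ioo x z, HasDerivAt g (g' t) t)
    (hg' : ∀ t ∈ Ioo x z, g' t ≠ 0) (hmono : StrictMonoOn (fun t => f' t / g' t) (Ioo x z)) :
    (f y - f x) / (g y - g x) < (f z - f x) / (g z - g x) ∧
      (f z - f x) / (g z - g x) < (f z - f y) / (g z - g y) := by
  rcases hasDerivWithinAt_forall_lt_or_forall_gt_of_forall_ne (convex_Ioo x z)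
    (fun t ht => (hg t ht).hasDerivWithinAt) hg' with hneg | hpos
  · have hneg_slope : ∀ a b, ((-f) a - (-f) b) / ((-g) a - (-g) b) = (f a - f b) / (g a - g b) :=
      fun a b => by simp only [Pi.neg_apply, ← neg_sub', neg_div_neg_eq]
    simpa only [hneg_slope] using cauchy_slope_lt_of_deriv_pos hxy hyz hfc.neg hgc.neg
      (fun t ht => (hf t ht).neg) (fun t ht => (hg t ht).neg) (fun t ht => neg_pos.2 (hneg t ht))
      (by simpa only [neg_div_neg_eq] using hmono)
  · exact cauchy_slope_lt_of_deriv_pos hxy hyz hfc hgc hf hg hpos hmono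

variable {a b : ℝ}

theorem strictMonoOn_div_of_deriv_left (hfc : ContinuousOn f (Ico a b))
    (hgc : ContinuousOn g (Ico a b)) (hf : ∀ x ∈ Ioo a b, HasDerivAt f (f' x) x)
    (hg : ∀ x ∈ Ioo a b, HasDerivAt g (g' x) x) (hg' : ∀ x ∈ Ioo a b, g' x ≠ 0)
    (hfa : f a = 0) (hga : g a = 0) (hmono : StrictMonoOn (fun x => f' x / g' x) (Ioo a b)) :
    StrictMonoOn (fun x => f x / g x) (Ioo a b) := by
  intro x hx y hy hxy
  have hsub : Ioo a y ⊆ Ioo a b := Ioo_subset_Ioo_right hy.2.le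
  simpa only [hfa, hga, sub_zero] using (cauchy_slope_lt hx.1 hxy
    (hfc.mono (Icc_subset_Ico_right hy.2)) (hgc.mono (Icc_subset_Ico_right hy.2))
    (fun t ht => hf t (hsub ht)) (fun t ht => hg t (hsub ht)) (fun t ht => hg' t (hsub ht))
    (hmono.mono hsub)).1

theorem strictMonoOn_div_of_deriv_right (hfc : ContinuousOn f (Ioc a b))
    (hgc : ContinuousOn g (Ioc a b)) (hf : ∀ x ∈ Ioo a b, HasDerivAt f (f' x) x)
    (hg : ∀ x ∈ Ioo a b, HasDerivAt g (g' x) x) (hg' : ∀ x ∈ Ioo a b, g' x ≠ 0)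
    (hfb : f b = 0) (hgb : g b = 0) (hmono : StrictMonoOn (fun x => f' x / g' x) (Ioo a b)) :
    StrictMonoOn (fun x => f x / g x) (Ioo a b) := by
  intro x hx y hy hxy
  have hsub : Ioo x b ⊆ Ioo a b := Ioo_subset_Ioo_left hx.1.le
  simpa only [hfb, hgb, zero_sub, neg_div_neg_eq] using (cauchy_slope_lt hxy hy.2
    (hfc.mono (Icc_subset_Ioc_left hx.1)) (hgc.mono (Icc_subset_Ioc_left hx.1))
    (fun t ht => hf t (hsub ht)) (fun t ht => hg t (hsub ht)) (fun t ht => hg' t (hsub ht))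
    (hmono.mono hsub)).2

end MonotoneLHopital

section SecondDerivative

variable {u u' u'' v v' v'' : ℝ → ℝ} {a c : ℝ}

lemma apply_ne_apply_of_hasDerivAt_ne_zero {x y : ℝ} (hxy : x < y)
    (hc : ContinuousOn v (Icc x y)) (hv : ∀ t ∈ Ioo x y, HasDerivAt v (v' t) t)
    (hv' : ∀ t ∈ Ioo x y, v' t ≠ 0) : v x ≠ v y := fun he =>
  let ⟨_, ht, ht0⟩ := exists_hasDerivAt_eq_zero hxy hc he hv
  hv' _ ht ht0

lemma apply_ne_zero_of_second_deriv_ne_zero (hv : ∀ x ∈ Icc a c, HasDerivAt v (v' x) x)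
    (hv' : ∀ x ∈ Icc a c, HasDerivAt v' (v'' x) x) (hva : v a = 0) (hvc : v c = 0)
    (hv'' : ∀ x ∈ Ioo a c, v'' x ≠ 0) : ∀ x ∈ Ioo a c, v x ≠ 0 := by
  intro x hx hvx
  obtain ⟨ξ, hξ, hξ0⟩ := exists_hasDerivAt_eq_zero hx.1
    (HasDerivAt.continuousOn fun t ht => hv t ⟨ht.1, ht.2.trans hx.2.le⟩) (hva.trans hvx.symm)
    (fun t ht => hv t ⟨ht.1.le, ht.2.le.trans hx.2.le⟩)
  obtain ⟨η, hη, hη0⟩ := exists_hasDerivAt_eq_zero hx.2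
    (HasDerivAt.continuousOn fun t ht => hv t ⟨hx.1.le.trans ht.1, ht.2⟩) (hvx.trans hvc.symm)
    (fun t ht => hv t ⟨hx.1.le.trans ht.1.le, ht.2.le⟩)
  refine apply_ne_apply_of_hasDerivAt_ne_zero (hξ.2.trans hη.1)
    (HasDerivAt.continuousOn fun t ht => hv' t ⟨hξ.1.le.trans ht.1, ht.2.trans hη.2.le⟩)
    (fun t ht => hv' t ⟨hξ.1.le.trans ht.1.le, ht.2.le.trans hη.2.le⟩)
    (fun t ht => hv'' t ⟨hξ.1.trans ht.1, ht.2.trans hη.2⟩) (hξ0.trans hη0.symm)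

lemma hasDerivAt_div_sub {x : ℝ} (hv : HasDerivAt v (v' x) x) (hx : x ≠ c) :
    HasDerivAt (fun t => v t / (t - c)) (((x - c) * v' x - v x) / (x - c) ^ 2) x :=
  (hv.div ((hasDerivAt_id' x).sub_const c) (sub_ne_zero.2 hx)).congr_deriv (by ring)

lemma hasDerivAt_sub_mul_sub {x : ℝ} (hv : HasDerivAt v (v' x) x)
    (hv' : HasDerivAt v' (v'' x) x) :
    HasDerivAt (fun t => (t - c) * v' t - v t) ((x - c) * v'' x) x :=
  ((((hasDerivAt_id' x).sub_const c).mul hv').sub hv).congr_deriv (by ring)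

theorem strictMonoOn_div_of_second_deriv
    (hu : ∀ x ∈ Icc a c, HasDerivAt u (u' x) x) (hu' : ∀ x ∈ Icc a c, HasDerivAt u' (u'' x) x)
    (hv : ∀ x ∈ Icc a c, HasDerivAt v (v' x) x) (hv' : ∀ x ∈ Icc a c, HasDerivAt v' (v'' x) x)
    (hua : u a = 0) (huc : u c = 0) (hva : v a = 0) (hvc : v c = 0)
    (hv'' : ∀ x ∈ Ioo a c, v'' x ≠ 0) (hmono : StrictMonoOn (fun x => u'' x / v'' x) (Ioo a c)) :
    StrictMonoOn (fun x => u x / v x) (Ioo a c) := by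
  have hP (x) (hx : x ∈ Icc a c) := hasDerivAt_sub_mul_sub (c := c) (hu x hx) (hu' x hx)
  have hQ (x) (hx : x ∈ Icc a c) := hasDerivAt_sub_mul_sub (c := c) (hv x hx) (hv' x hx)
  have hQ' : ∀ x ∈ Ioo a c, (x - c) * v'' x ≠ 0 :=
    fun x hx => mul_ne_zero (sub_ne_zero.2 hx.2.ne) (hv'' x hx)
  have hP_div_Q := strictMonoOn_div_of_deriv_right
    (HasDerivAt.continuousOn fun x hx => hP x (Ioc_subset_Icc_self hx))
    (HasDerivAt.continuousOn fun x hx => hQ x (Ioc_subset_Icc_self hx))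
    (fun x hx => hP x (Ioo_subset_Icc_self hx)) (fun x hx => hQ x (Ioo_subset_Icc_self hx)) hQ'
    (by simp [huc]) (by simp [hvc])
    (hmono.congr fun x hx => (mul_div_mul_left _ _ (sub_ne_zero.2 hx.2.ne)).symm)
  have hQ_ne : ∀ x ∈ Ioo a c, (x - c) * v' x - v x ≠ 0 := fun x hx => by
    simpa [hvc] using apply_ne_apply_of_hasDerivAt_ne_zero hx.2
      (HasDerivAt.continuousOn fun t ht => hQ t ⟨hx.1.le.trans ht.1, ht.2⟩)
      (fun t ht => hQ t ⟨hx.1.le.trans ht.1.le, ht.2.le⟩)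
      (fun t ht => hQ' t ⟨hx.1.trans ht.1, ht.2⟩)
  have hU (x) (hx : x ∈ Ico a c) := hasDerivAt_div_sub (hu x (Ico_subset_Icc_self hx)) hx.2.ne
  have hV (x) (hx : x ∈ Ico a c) := hasDerivAt_div_sub (hv x (Ico_subset_Icc_self hx)) hx.2.ne
  refine (strictMonoOn_div_of_deriv_left (HasDerivAt.continuousOn hU) (HasDerivAt.continuousOn hV)
    (fun x hx => hU x (Ioo_subset_Ico_self hx)) (fun x hx => hV x (Ioo_subset_Ico_self hx))
    (fun x hx => div_ne_zero (hQ_ne x hx) (pow_ne_zero 2 (sub_ne_zero.2 hx.2.ne)))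
    (by simp [hua]) (by simp [hva])
    (hP_div_Q.congr fun x hx => ?_)).congr fun x hx => ?_
  · exact (div_div_div_cancel_right₀ (pow_ne_zero 2 (sub_ne_zero.2 hx.2.ne)) _ _).symm
  · exact div_div_div_cancel_right₀ (sub_ne_zero.2 hx.2.ne) _ _

end SecondDerivative

open Polynomial

lemma hasDerivAt_bernPoly (k : ℕ) (t : ℝ) :
    HasDerivAt (bernPoly (k + 1)) ((k + 1) * bernPoly k t) t := by
  have h := Polynomial.hasDerivAt_aeval (Polynomial.bernoulli (k + 1)) t
  rw [derivative_bernoulli_add_one] at h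
  exact h.congr_deriv (by simp [bernPoly])

lemma hasDerivAt_bernPoly_add_two (k : ℕ) (t : ℝ) :
    HasDerivAt (bernPoly (k + 2)) ((k + 2) * bernPoly (k + 1) t) t :=
  (hasDerivAt_bernPoly (k + 1) t).congr_deriv (by push_cast; ring)

lemma hasDerivAt_deriv_bernPoly_add_two (k : ℕ) (t : ℝ) :
    HasDerivAt (fun t => (k + 2) * bernPoly (k + 1) t) ((k + 2) * (k + 1) * bernPoly k t) t :=
  ((hasDerivAt_bernPoly k t).const_mul _).congr_deriv (by ring)

lemma bernPoly_one_sub (k : ℕ) (t : ℝ) : bernPoly k (1 - t) = (-1) ^ k * bernPoly k t := by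
  simpa [bernPoly, aeval_comp] using congrArg (aeval t) (bernoulli_comp_one_sub_X k)

lemma bernPoly_eval_one_half_of_odd {k : ℕ} (hk : Odd k) : bernPoly k (1 / 2) = 0 := by
  have h := bernPoly_one_sub k (1 / 2)
  rw [hk.neg_one_pow, show (1 : ℝ) - 1 / 2 = 1 / 2 by norm_num] at h
  linarith

lemma bernPoly_eval_zero_of_odd {k : ℕ} (hk : Odd k) (hk1 : k ≠ 1) : bernPoly k 0 = 0 := by
  rw [bernPoly, ← coeff_zero_eq_aeval_zero', coeff_bernoulli]
  simp [bernoulli_eq_zero_of_odd hk (by grind)]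

lemma bernPoly_div_bernPoly_one_sub {j k : ℕ} (hj : Odd j) (hk : Odd k) (t : ℝ) :
    bernPoly j (1 - t) / bernPoly k (1 - t) = bernPoly j t / bernPoly k t := by
  rw [bernPoly_one_sub, bernPoly_one_sub, hj.neg_one_pow, hk.neg_one_pow, neg_one_mul,
    neg_one_mul, neg_div_neg_eq]

lemma bernPoly_one (t : ℝ) : bernPoly 1 t = t - 1 / 2 := by
  simp [bernPoly, Polynomial.bernoulli_one]

lemma bernPoly_three (t : ℝ) : bernPoly 3 t = t * (t - 1 / 2) * (t - 1) := by
  norm_num [bernPoly, bernoulli_def, Finset.sum_range_succ, bernoulli_eq_bernoulli'_of_ne_one]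
  ring

lemma bernPoly_odd_ne_zero (m : ℕ) : ∀ t ∈ Ioo (0 : ℝ) (1 / 2), bernPoly (2 * m + 1) t ≠ 0 := by
  induction m with
  | zero => exact fun t ht => by simpa [bernPoly_one, sub_eq_zero] using ht.2.ne
  | succ m ih =>
    refine apply_ne_zero_of_second_deriv_ne_zero (fun x _ => hasDerivAt_bernPoly_add_two _ x)
      (fun x _ => hasDerivAt_deriv_bernPoly_add_two _ x)
      (bernPoly_eval_zero_of_odd ⟨m + 1, rfl⟩ (by omega))
      (bernPoly_eval_one_half_of_odd ⟨m + 1, rfl⟩)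
      fun t ht => ?_
    have := ih t ht
    positivity

lemma strictMonoOn_bernPoly_one_div_bernPoly_three :
    StrictMonoOn (fun t => bernPoly 1 t / bernPoly 3 t) (Ioo 0 (1 / 2)) := by
  have hdiv : EqOn (fun t : ℝ => 1 / (t * (t - 1))) (fun t => bernPoly 1 t / bernPoly 3 t)
      (Ioo 0 (1 / 2)) := fun t ht => by
    dsimp only
    rw [bernPoly_one, bernPoly_three, mul_right_comm, div_mul_cancel_right₀ (sub_ne_zero.2 ht.2.ne),
      one_div]
  refine StrictMonoOn.congr (fun x hx y hy hxy => ?_) hdiv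
  rw [one_div_lt_one_div_of_neg (by nlinarith [hx.1, hx.2]) (by nlinarith [hy.1, hy.2])]
  nlinarith [hx.1, hy.2]

theorem strictMonoOn_bernPoly_odd_div (m : ℕ) :
    StrictMonoOn (fun t => bernPoly (2 * m + 1) t / bernPoly (2 * m + 3) t) (Ioo 0 (1 / 2)) := by
  induction m with
  | zero => exact strictMonoOn_bernPoly_one_div_bernPoly_three
  | succ m ih =>
    refine strictMonoOn_div_of_second_deriv (fun x _ => hasDerivAt_bernPoly_add_two _ x)
      (fun x _ => hasDerivAt_deriv_bernPoly_add_two _ x)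
      (fun x _ => hasDerivAt_bernPoly_add_two (2 * m + 3) x)
      (fun x _ => hasDerivAt_deriv_bernPoly_add_two (2 * m + 3) x)
      (bernPoly_eval_zero_of_odd ⟨m + 1, rfl⟩ (by omega))
      (bernPoly_eval_one_half_of_odd ⟨m + 1, rfl⟩)
      (bernPoly_eval_zero_of_odd ⟨m + 2, rfl⟩ (by omega))
      (bernPoly_eval_one_half_of_odd ⟨m + 2, rfl⟩)
      (fun t ht => ?_) fun x hx y hy hxy => ?_
    · have := bernPoly_odd_ne_zero (m + 1) t ht
      positivity
    · simp only [mul_div_mul_comm]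
      exact mul_lt_mul_of_pos_left (ih hx hy hxy) (by positivity)

theorem bernoulli_poly_ratio_monotone (n : ℕ) (hn : 0 < n) :
    StrictMonoOn (fun t : ℝ => bernPoly (2 * n - 1) t / bernPoly (2 * n + 1) t)
      (Set.Ioo (0 : ℝ) (1 / 2)) ∧
    StrictAntiOn (fun t : ℝ => bernPoly (2 * n - 1) t / bernPoly (2 * n + 1) t)
      (Set.Ioo (1 / 2 : ℝ) 1) := by
  obtain ⟨m, rfl⟩ : ∃ m, n = m + 1 := ⟨n - 1, by omega⟩
  rw [show 2 * (m + 1) - 1 = 2 * m + 1 by omega, show 2 * (m + 1) + 1 = 2 * m + 3 by omega]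
  refine ⟨strictMonoOn_bernPoly_odd_div m, fun x hx y hy hxy => ?_⟩
  have hodd : Odd (2 * m + 1) ∧ Odd (2 * m + 3) := ⟨⟨m, rfl⟩, ⟨m + 1, rfl⟩⟩
  dsimp only
  rw [← bernPoly_div_bernPoly_one_sub hodd.1 hodd.2 x,
    ← bernPoly_div_bernPoly_one_sub hodd.1 hodd.2 y]
  exact strictMonoOn_bernPoly_odd_div m ⟨by linarith [hy.2], by linarith [hy.1]⟩
    ⟨by linarith [hx.2], by linarith [hx.1]⟩ (by linarith)
end

section
/- For every real x with 0 < |x| < 2π, the identity ln(2(1 − cos x)/x²) = −∑_{k=1}^∞ (|B_{2k}|/k) · x^{2k}/(2k)! holds, where the series on the right converges. -/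
/-!
Euler's product `sin (x/2) / (x/2) = ∏ₙ (1 - x² / (2πn)²)` turns `-log` of the left side into
`∑ₙ -log (1 - aₙ)` with `0 ≤ aₙ < 1`. Expanding each logarithm as `∑ₖ aₙᵏ / k` gives a double
series of nonnegative terms, so it may be summed over `n` first; this produces
`ζ(2k) (x / 2π)^{2k} / k`, and `ζ(2k) = |B_{2k}| (2π)^{2k} / (2 (2k)!)`. Finally
`2 (1 - cos x) / x² = (sin (x/2) / (x/2))²` accounts for the factor `2`.
-/

open Real Filter Finset Topology Nat

theorem hasSum_comm_of_nonneg {β γ : Type*} {f : β → γ → ℝ} {g : β → ℝ} {h : γ → ℝ} {a : ℝ}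
    (hf : ∀ b c, 0 ≤ f b c) (hrow : ∀ b, HasSum (f b) (g b)) (hg : HasSum g a)
    (hcol : ∀ c, HasSum (fun b ↦ f b c) (h c)) : HasSum h a := by
  have hsum : Summable (Function.uncurry f) := by
    refine (summable_prod_of_nonneg fun p ↦ hf p.1 p.2).mpr ⟨fun b ↦ (hrow b).summable, ?_⟩
    simpa only [Function.uncurry_apply_pair, (hrow _).tsum_eq] using hg.summable
  have huncurry : HasSum (Function.uncurry f) a := by
    have := hsum.hasSum
    rwa [← (this.prod_fiberwise hrow).unique hg]
  exact ((Equiv.prodComm γ β).hasSum_iff.mpr huncurry).prod_fiberwise hcol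

theorem hasSum_neg_log_one_sub_of_tendsto_prod {a : ℕ → ℝ} {p : ℝ}
    (ha₀ : ∀ n, 0 ≤ a n) (ha₁ : ∀ n, a n < 1)
    (hp : Tendsto (fun n ↦ ∏ j ∈ range n, (1 - a j)) atTop (𝓝 p)) (hp₀ : p ≠ 0) :
    HasSum (fun n ↦ -log (1 - a n)) (-log p) := by
  have hnonneg : ∀ n, 0 ≤ -log (1 - a n) := fun n ↦
    neg_nonneg.mpr (log_nonpos (by linarith [ha₁ n]) (by linarith [ha₀ n]))
  rw [hasSum_iff_tendsto_nat_of_nonneg hnonneg]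
  have hlog := ((continuousAt_log hp₀).tendsto.comp hp).neg
  refine hlog.congr fun n ↦ ?_
  rw [Function.comp_apply, log_prod fun j _ ↦ (sub_pos.mpr (ha₁ j)).ne', sum_neg_distrib]

theorem Real.tendsto_euler_sinc_prod (x : ℝ) :
    Tendsto (fun n : ℕ ↦ ∏ j ∈ range n, (1 - x ^ 2 / ((j : ℝ) + 1) ^ 2)) atTop
      (𝓝 (sinc (π * x))) := by
  rcases eq_or_ne x 0 with rfl | hx
  · simp
  have hπx : π * x ≠ 0 := mul_ne_zero pi_ne_zero hx
  rw [sinc_of_ne_zero hπx]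
  refine ((tendsto_euler_sin_prod x).div_const (π * x)).congr fun n ↦ ?_
  field_simp

theorem Real.sinc_pos_of_abs_lt_pi {y : ℝ} (hy : |y| < π) : 0 < sinc y := by
  rcases eq_or_ne y 0 with rfl | hy₀
  · simp
  wlog hy_pos : 0 < y generalizing y
  · rw [← sinc_neg]
    exact this (by rwa [abs_neg]) (neg_ne_zero.mpr hy₀) (by grind)
  rw [sinc_of_ne_zero hy₀]
  exact div_pos (sin_pos_of_pos_of_lt_pi hy_pos (lt_of_abs_lt hy)) hy_pos

/-- The sign is read off from Euler's formula for `ζ(2k)`, whose value is positive. -/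
theorem neg_one_pow_mul_bernoulli_two_mul_pos {k : ℕ} (hk : k ≠ 0) :
    0 < (-1 : ℝ) ^ (k + 1) * bernoulli (2 * k) := by
  have hζ := hasSum_zeta_nat hk
  have hζ_pos : 0 < (-1 : ℝ) ^ (k + 1) * 2 ^ (2 * k - 1) * π ^ (2 * k) * bernoulli (2 * k) /
      (2 * k)! :=
    lt_of_lt_of_le (by simp) (le_hasSum hζ 1 fun n _ ↦ by positivity)
  have hfactor : (0 : ℝ) < 2 ^ (2 * k - 1) * π ^ (2 * k) / (2 * k)! := by positivity
  exact pos_of_mul_pos_left (hζ_pos.trans_eq (by ring)) hfactor.le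

theorem abs_bernoulli_two_mul {k : ℕ} (hk : k ≠ 0) :
    |(bernoulli (2 * k) : ℝ)| = (-1) ^ (k + 1) * bernoulli (2 * k) := by
  rw [← abs_of_pos (neg_one_pow_mul_bernoulli_two_mul_pos hk), abs_mul, abs_neg_one_pow, one_mul]

theorem hasSum_one_div_nat_add_one_pow_two_mul {k : ℕ} (hk : k ≠ 0) :
    HasSum (fun n : ℕ ↦ 1 / ((n : ℝ) + 1) ^ (2 * k))
      (|(bernoulli (2 * k) : ℝ)| * (2 * π) ^ (2 * k) / (2 * (2 * k)!)) := by
  have hζ := (hasSum_nat_add_iff' 1).mpr (hasSum_zeta_nat hk)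
  simp only [sum_range_one, Nat.cast_zero, zero_pow (by omega : 2 * k ≠ 0), div_zero, sub_zero,
    Nat.cast_add, Nat.cast_one] at hζ
  have hvalue : |(bernoulli (2 * k) : ℝ)| * (2 * π) ^ (2 * k) / (2 * (2 * k)!) =
      (-1) ^ (k + 1) * 2 ^ (2 * k - 1) * π ^ (2 * k) * bernoulli (2 * k) / (2 * k)! := by
    rw [abs_bernoulli_two_mul hk, mul_pow, pow_sub₀ _ two_ne_zero (by omega : 1 ≤ 2 * k)]
    ring
  rwa [hvalue]

theorem Real.hasSum_neg_log_one_sub_sq_div_sq {x : ℝ} (hx : |x| < 1) :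
    HasSum (fun n : ℕ ↦ -log (1 - x ^ 2 / ((n : ℝ) + 1) ^ 2)) (-log (sinc (π * x))) := by
  have hx_sq : x ^ 2 < 1 := by rwa [sq_lt_one_iff_abs_lt_one]
  have hterm_le : ∀ n : ℕ, x ^ 2 / ((n : ℝ) + 1) ^ 2 ≤ x ^ 2 := fun n ↦
    div_le_self (sq_nonneg x) (one_le_pow₀ (by simp))
  refine hasSum_neg_log_one_sub_of_tendsto_prod (fun n ↦ by positivity)
    (fun n ↦ (hterm_le n).trans_lt hx_sq) (tendsto_euler_sinc_prod x) ?_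
  refine (sinc_pos_of_abs_lt_pi ?_).ne'
  rw [abs_mul, abs_of_pos pi_pos]
  exact mul_lt_of_lt_one_right pi_pos hx

theorem Real.two_mul_one_sub_cos_div_sq {x : ℝ} (hx : x ≠ 0) :
    2 * (1 - cos x) / x ^ 2 = sinc (x / 2) ^ 2 := by
  have hcos : cos x = 1 - 2 * sin (x / 2) ^ 2 := by
    have h := cos_two_mul' (x / 2)
    rw [mul_div_cancel₀ x two_ne_zero] at h
    linarith [cos_sq_add_sin_sq (x / 2)]
  rw [sinc_of_ne_zero (div_ne_zero hx two_ne_zero), hcos]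
  field_simp
  ring

theorem Real.hasSum_abs_bernoulli_mul_pow_div_factorial {x : ℝ} (hx : |x| < 2 * π) :
    HasSum (fun k : ℕ ↦ |(bernoulli (2 * (k + 1)) : ℝ)| / (k + 1) * x ^ (2 * (k + 1)) /
      (2 * (k + 1))!) (-log (sinc (x / 2) ^ 2)) := by
  set z := x / (2 * π) with hz_def
  have hz : |z| < 1 := by
    rwa [abs_div, abs_of_pos two_pi_pos, div_lt_one two_pi_pos]
  have hπz : π * z = x / 2 := by
    rw [hz_def]; field_simp
  set a : ℕ → ℝ := fun n ↦ z ^ 2 / ((n : ℝ) + 1) ^ 2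
  have ha_abs : ∀ n, |a n| < 1 := fun n ↦ by
    rw [abs_of_nonneg (by positivity)]
    exact (div_le_self (sq_nonneg z) (one_le_pow₀ (by simp))).trans_lt
      (by rwa [sq_lt_one_iff_abs_lt_one])
  have hrows : ∀ n, HasSum (fun k : ℕ ↦ a n ^ (k + 1) / (k + 1)) (-log (1 - a n)) :=
    fun n ↦ hasSum_pow_div_log_of_abs_lt_one (ha_abs n)
  have hcols : ∀ k : ℕ, HasSum (fun n ↦ a n ^ (k + 1) / (k + 1))
      (z ^ (2 * (k + 1)) / (k + 1) * (|(bernoulli (2 * (k + 1)) : ℝ)| * (2 * π) ^ (2 * (k + 1)) /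
        (2 * (2 * (k + 1))!))) := by
    intro k
    have := (hasSum_one_div_nat_add_one_pow_two_mul k.add_one_ne_zero).mul_left
      (z ^ (2 * (k + 1)) / (k + 1))
    refine this.congr_fun fun n ↦ ?_
    simp only [a, div_pow, ← pow_mul]
    ring
  have hsum := (hasSum_comm_of_nonneg (fun n k ↦ by positivity) hrows
    (hasSum_neg_log_one_sub_sq_div_sq hz) hcols).mul_left 2
  rw [hπz] at hsum
  have hvalue : -log (sinc (x / 2) ^ 2) = 2 * -log (sinc (x / 2)) := by
    rw [log_pow]
    push_cast
    ring
  rw [hvalue]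
  refine hsum.congr_fun fun k ↦ ?_
  rw [hz_def, div_pow, mul_pow]
  field_simp

theorem log_cos_remainder_series (x : ℝ) (hx0 : 0 < |x|) (hx : |x| < 2 * Real.pi) :
    HasSum
      (fun k : ℕ =>
        (|(bernoulli (2 * (k + 1)) : ℝ)| / (k + 1)) * x ^ (2 * (k + 1)) /
          (Nat.factorial (2 * (k + 1))))
      (- Real.log (2 * (1 - Real.cos x) / x ^ 2)) := by
  rw [Real.two_mul_one_sub_cos_div_sq (abs_pos.mp hx0)]
  exact Real.hasSum_abs_bernoulli_mul_pow_div_factorial hx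
end
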